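/- arXiv:2411.05096 — 5 statements merged into one kernel-verified Lean document; each statement's English description precedes it below -/
import Mathlib

section
/- Let T be a linear operator on F_q^n of similarity class type {(d_1,λ^1),…,(d_r,λ^r)}. Then the number of 1-dimensional T-invariant subspaces of F_q^n equals the sum over all indices i with d_i=1 of [ℓ(λ^i)]_q, where ℓ(λ^i) is the number of parts of λ^i and [m]_q = 1+q+⋯+q^{m-1}. -/
/-- The q-analog `[m]_q = 1 + q + ⋯ + q^(m-1)`. -/
def qInt (q m : ℕ) : ℕ := ∑ j ∈ Finset.range m, q ^ j

/-- The q-factorial `[k]_q! = ∏_{j=1}^k [j]_q`. -/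
def qFact (q k : ℕ) : ℕ := ∏ j ∈ Finset.range k, qInt q (j + 1)

/-- A complete flag `0 = V 0 ⊆ V 1 ⊆ ⋯ ⊆ V n = F^n` with `dim (V i) = i`. -/
def IsFlag (F : Type) [Field F] (n : ℕ) (V : ℕ → Submodule F (Fin n → F)) : Prop :=
  V 0 = ⊥ ∧ V n = ⊤ ∧ (∀ i, V i ≤ V (i + 1)) ∧ ∀ i, i ≤ n → Module.finrank F ↥(V i) = i

/-- A Hessenberg function on `[n]` (with values queried at `1,…,n`). -/
def IsHess (n : ℕ) (m : ℕ → ℕ) : Prop :=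
  (∀ i, 1 ≤ i → i ≤ n → i ≤ m i ∧ m i ≤ n) ∧
  ∀ i j, 1 ≤ i → i ≤ j → j ≤ n → m i ≤ m j

/-- The set of `F_q`-points of the Hessenberg variety `H(m, T)`. -/
def Hess (F : Type) [Field F] (n : ℕ) (m : ℕ → ℕ) (T : Module.End F (Fin n → F)) :
    Set (ℕ → Submodule F (Fin n → F)) :=
  {V | IsFlag F n V ∧ ∀ i, 1 ≤ i → i ≤ n → (V i).map T ≤ V (m i)}

/-! A `T`-invariant line is a line inside some eigenspace `E_a`, and distinct eigenspaces meet
trivially, so the invariant lines number `∑_a |ℙ(E_a)| = ∑_a [dim E_a]_q`. Along the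
`F[t]`-module decomposition, `E_a` is the `(t - a)`-torsion of `⨁ F[t]/(f_i^{λ_{i,j}})`. In a
summand `F[t]/(f^k)` this torsion is trivial when `f ≠ t - a`, by coprimality, and is
`(f^{k-1}) / (f^k) ≅ F[t]/(t - a) ≅ F` when `f = t - a`. Since the `f_i` are distinct,
`dim E_a = ℓ(λ^i)` for the unique `i` with `f_i = t - a`, and `dim E_a = 0` if there is none. -/

open Polynomial Module Submodule Function
open scoped LinearAlgebra.Projectivization

section Lines

variable {K V : Type*}

theorem ncard_setOf_le_finrank_eq_one [DivisionRing K] [AddCommGroup V] [Module K V]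
    (E : Submodule K V) :
    {W : Submodule K V | W ≤ E ∧ finrank K W = 1}.ncard = Nat.card (ℙ K E) := by
  rw [← Nat.card_coe_set_eq]
  refine Nat.card_congr (((Projectivization.equivSubmodule K E).trans ?_).symm)
  refine ((MapSubtype.orderIso E).toEquiv.subtypeEquiv fun H => ?_).trans
    (Equiv.subtypeSubtypeEquivSubtypeInter _ _)
  exact (finrank_map_subtype_eq E H).symm ▸ Iff.rfl

variable [Field K] [AddCommGroup V] [Module K V]

theorem Module.End.map_le_and_finrank_eq_one_iff (T : End K V) (W : Submodule K V) :
    W.map T ≤ W ∧ finrank K W = 1 ↔ (∃ a, W ≤ T.eigenspace a) ∧ finrank K W = 1 := by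
  refine and_congr_left fun hW => ⟨fun hT => ?_, fun ⟨a, ha⟩ => ?_⟩
  · obtain ⟨v, hvW, hv0⟩ := W.exists_mem_ne_zero_of_ne_bot
      (by rintro rfl; simp at hW)
    have hWv := eq_span_singleton_of_mem_of_finrank_eq_one hW hvW hv0
    obtain ⟨a, ha⟩ := mem_span_singleton.1 (hWv ▸ hT (mem_map_of_mem hvW))
    refine ⟨a, hWv ▸ (span_singleton_le_iff_mem _ _).2 ?_⟩
    exact End.mem_eigenspace_iff.2 ha.symm
  · rintro _ ⟨w, hw, rfl⟩
    rw [End.mem_eigenspace_iff.1 (ha hw)]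
    exact W.smul_mem a hw

theorem Module.End.ncard_invariant_lines_eq_sum_card_projectivization [Fintype K] [Finite V]
    (T : End K V) :
    {W : Submodule K V | finrank K W = 1 ∧ W.map T ≤ W}.ncard =
      ∑ a : K, Nat.card (ℙ K (T.eigenspace a)) := by
  have hunion : {W : Submodule K V | finrank K W = 1 ∧ W.map T ≤ W} =
      ⋃ a, {W | W ≤ T.eigenspace a ∧ finrank K W = 1} := by
    ext W
    simp only [Set.mem_ofPred_eq, Set.mem_iUnion, and_comm (a := finrank K W = 1),
      map_le_and_finrank_eq_one_iff, exists_and_right]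
  have hdisj : Pairwise (Disjoint on
      fun a => {W : Submodule K V | W ≤ T.eigenspace a ∧ finrank K W = 1}) := by
    intro a b hab
    refine Set.disjoint_left.2 fun W ⟨ha, hW⟩ ⟨hb, _⟩ => ?_
    have : W = ⊥ := disjoint_self.1 ((T.eigenspaces_iSupIndep.pairwiseDisjoint hab).mono ha hb)
    subst this; simp at hW
  rw [hunion, Set.ncard_iUnion_of_finite (fun _ => Set.toFinite _) hdisj,
    finsum_eq_sum_of_fintype]
  simp only [ncard_setOf_le_finrank_eq_one]

end Lines

section Torsion

variable {R M N : Type*} [CommRing R] [AddCommGroup M] [Module R M] [AddCommGroup N] [Module R N]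

theorem Submodule.torsionBy_eq_bot_of_isCoprime {p h : R} (hM : IsTorsionBy R M h)
    (hc : IsCoprime p h) :
    torsionBy R M p = ⊥ := by
  obtain ⟨u, v, huv⟩ := hc
  refine eq_bot_iff.2 fun x hx => ?_
  rw [mem_bot, ← one_smul R x, ← huv, add_smul, mul_smul, mul_smul,
    (mem_torsionBy_iff p x).1 hx, hM, smul_zero, smul_zero, add_zero]

theorem Submodule.card_torsionBy_congr (e : M ≃ₗ[R] N) (p : R) :
    Nat.card (torsionBy R M p) = Nat.card (torsionBy R N p) :=
  Nat.card_congr <| e.toEquiv.subtypeEquiv fun x => by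
    simp only [mem_torsionBy_iff, LinearEquiv.coe_toEquiv, ← map_smul,
      LinearEquiv.map_eq_zero_iff]

theorem Submodule.card_torsionBy_pi {ι : Type*} [Fintype ι] {M : ι → Type*}
    [∀ i, AddCommGroup (M i)] [∀ i, Module R (M i)] (p : R) :
    Nat.card (torsionBy R (∀ i, M i) p) = ∏ i, Nat.card (torsionBy R (M i) p) := by
  rw [← Nat.card_pi]
  refine Nat.card_congr <| (Equiv.subtypeEquivRight fun x => ?_).trans Equiv.subtypePiEquivPi
  simp only [mem_torsionBy_iff, funext_iff, Pi.smul_apply, Pi.zero_apply]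

theorem Ideal.Quotient.torsionBy_eq_bot_of_isCoprime {p h : R} (hc : IsCoprime p h) :
    torsionBy R (R ⧸ Ideal.span {h}) p = ⊥ :=
  Submodule.torsionBy_eq_bot_of_isCoprime ((isTorsionBy_quotient_iff _ h).2 fun x =>
    Ideal.mul_mem_right x _ (Ideal.mem_span_singleton_self h)) hc

theorem Ideal.Quotient.torsionOf_mk_eq_span_singleton [IsDomain R] {a b : R} (hb : b ≠ 0) :
    Ideal.torsionOf R (R ⧸ Ideal.span {a * b}) (Ideal.Quotient.mk _ b) = Ideal.span {a} := by
  ext r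
  rw [Ideal.mem_torsionOf_iff, Ideal.mem_span_singleton, Algebra.smul_def,
    Ideal.Quotient.algebraMap_eq, ← map_mul, Ideal.Quotient.eq_zero_iff_mem,
    Ideal.mem_span_singleton, mul_dvd_mul_iff_right hb]

noncomputable def Ideal.Quotient.torsionByMulEquiv [IsDomain R] {a b : R} (ha : a ≠ 0)
    (hb : b ≠ 0) :
    torsionBy R (R ⧸ Ideal.span {a * b}) a ≃ₗ[R] R ⧸ Ideal.span {a} :=
  (LinearEquiv.ofEq _ _ (Ideal.Quotient.torsionBy_eq_span_singleton a b
      (mem_nonZeroDivisors_of_ne_zero ha))).trans <|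
    (Ideal.quotTorsionOfEquivSpanSingleton R _ _).symm.trans <|
      Submodule.quotEquivOfEq _ _ (Ideal.Quotient.torsionOf_mk_eq_span_singleton hb)

end Torsion

section Eigenspace

variable {F : Type*} [Field F]

theorem Polynomial.Monic.eq_X_sub_C_of_X_sub_C_dvd {f : F[X]} (hf : f.Monic) (hirr : Irreducible f)
    {a : F} (h : X - C a ∣ f) : f = X - C a :=
  eq_of_monic_of_associated hf (monic_X_sub_C a)
    ((irreducible_X_sub_C a).associated_of_dvd hirr h).symm

open Classical in
theorem card_torsionBy_X_sub_C_quotient_pow {f : F[X]} (hf : f.Monic) (hirr : Irreducible f)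
    {k : ℕ} (hk : 0 < k) (a : F) :
    Nat.card (torsionBy F[X] (F[X] ⧸ Ideal.span {f ^ k}) (X - C a)) =
      if f = X - C a then Nat.card F else 1 := by
  split_ifs with h
  · obtain ⟨j, rfl⟩ := Nat.exists_eq_add_of_lt hk
    rw [h, pow_succ']
    exact Nat.card_congr ((Ideal.Quotient.torsionByMulEquiv (X_sub_C_ne_zero a)
      (pow_ne_zero _ (X_sub_C_ne_zero a))).toEquiv.trans (quotientSpanXSubCAlgEquiv a).toEquiv)
  · have hc : IsCoprime (X - C a) f := (irreducible_X_sub_C a).coprime_iff_not_dvd.2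
      fun hdvd => h (hf.eq_X_sub_C_of_X_sub_C_dvd hirr hdvd)
    rw [Ideal.Quotient.torsionBy_eq_bot_of_isCoprime hc.pow_right]
    exact Nat.card_unique

theorem Module.End.card_eigenspace_eq_card_torsionBy {R M : Type*} [CommRing R] [AddCommGroup M]
    [Module R M] (T : End R M) (a : R) :
    Nat.card (T.eigenspace a) = Nat.card (torsionBy R[X] (AEval' T) (X - C a)) :=
  Nat.card_congr <| (AEval'.of T).toEquiv.subtypeEquiv fun v => by
    rw [End.mem_eigenspace_iff, mem_torsionBy_iff, LinearEquiv.coe_toEquiv, sub_smul,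
      AEval'.X_smul_of, AEval.C_smul, sub_eq_zero, ← map_smul, (AEval'.of T).injective.eq_iff]

open Classical in
theorem card_eigenspace_of_equiv_pi_quotient {V ι : Type*} [AddCommGroup V] [Module F V]
    [Fintype ι] (T : End F V) {f : ι → F[X]}
    (hmonic : ∀ i, (f i).Monic) (hirr : ∀ i, Irreducible (f i))
    {len : ι → ℕ} {lam : (i : ι) → Fin (len i) → ℕ} (hpos : ∀ i j, 0 < lam i j)
    (e : AEval' T ≃ₗ[F[X]] ((i : ι) → (j : Fin (len i)) →
      F[X] ⧸ Ideal.span {f i ^ lam i j}))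
    (a : F) :
    Nat.card (T.eigenspace a) = Nat.card F ^ ∑ i, if f i = X - C a then len i else 0 := by
  simp only [T.card_eigenspace_eq_card_torsionBy, card_torsionBy_congr e, card_torsionBy_pi,
    card_torsionBy_X_sub_C_quotient_pow (hmonic _) (hirr _) (hpos _ _),
    ← Finset.prod_pow_eq_pow_sum]
  refine Finset.prod_congr rfl fun i _ => ?_
  split_ifs <;> simp

end Eigenspace

section Counting

variable {F : Type*} [Field F] [Fintype F]

theorem card_projectivization_eq_qInt {V : Type*} [AddCommGroup V] [Module F V] {m : ℕ}
    (hV : Nat.card V = Nat.card F ^ m) : Nat.card (ℙ F V) = qInt (Nat.card F) m := by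
  rw [Projectivization.card'', hV, qInt, Nat.geomSum_eq Finite.one_lt_card]

open Classical in
theorem Polynomial.Monic.sum_ite_eq_X_sub_C {M : Type*} [AddCommMonoid M] {f : F[X]}
    (hf : f.Monic) (c : M) :
    ∑ a : F, (if f = X - C a then c else 0) = if f.natDegree = 1 then c else 0 := by
  split_ifs with hdeg
  · have hroot : ∀ a, f = X - C a ↔ -f.coeff 0 = a := fun a => by
      conv_lhs => rw [hf.eq_X_add_C hdeg, ← sub_neg_eq_add, ← map_neg]
      exact ⟨fun h => C_injective (sub_right_injective h), fun h => h ▸ rfl⟩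
    simp only [hroot, Finset.sum_ite_eq, Finset.mem_univ, if_true]
  · refine Finset.sum_eq_zero fun a _ => if_neg fun h => hdeg ?_
    rw [h, natDegree_X_sub_C]

open Classical in
theorem sum_apply_sum_ite_eq_X_sub_C {ι M : Type*} [Fintype ι] [AddCommMonoid M] {f : ι → F[X]}
    (hmonic : ∀ i, (f i).Monic) (hinj : Injective f) (len : ι → ℕ) {g : ℕ → M}
    (hg : g 0 = 0) :
    ∑ a : F, g (∑ i, if f i = X - C a then len i else 0) =
      ∑ i ∈ Finset.univ.filter (fun i => (f i).natDegree = 1), g (len i) := by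
  have hcollapse : ∀ a : F, g (∑ i, if f i = X - C a then len i else 0) =
      ∑ i, if f i = X - C a then g (len i) else 0 := fun a => by
    by_cases h : ∃ i₀, f i₀ = X - C a
    · obtain ⟨i₀, hi₀⟩ := h
      have hiff : ∀ i, f i = X - C a ↔ i = i₀ := fun i => hi₀ ▸ hinj.eq_iff
      simp only [hiff, Finset.sum_ite_eq', Finset.mem_univ, if_true]
    · rw [not_exists] at h
      simp only [h, if_false, Finset.sum_const_zero, hg]
  rw [Finset.sum_congr rfl fun a _ => hcollapse a, Finset.sum_comm, Finset.sum_filter]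
  exact Finset.sum_congr rfl fun i _ => (hmonic i).sum_ite_eq_X_sub_C _

end Counting

/-- If `T` has similarity class type `{(d 1, λ^1), …, (d r, λ^r)}`, encoded by the
`F[t]`-module decomposition of `F^n`, then the number of one-dimensional `T`-invariant
subspaces equals the sum of `[ℓ(λ^i)]_q` over the indices `i` with `d i = 1`. -/
theorem stmt3 (F : Type) [Field F] [Fintype F] (n : ℕ)
    (T : Module.End F (Fin n → F)) (r : ℕ) (f : Fin r → Polynomial F)
    (hmonic : ∀ i, (f i).Monic) (hirr : ∀ i, Irreducible (f i))
    (hdist : Function.Injective f)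
    (len : Fin r → ℕ) (lam : (i : Fin r) → Fin (len i) → ℕ)
    (hpos : ∀ i j, 0 < lam i j)
    (hdecomp : Nonempty
      ((Module.AEval' (T : (Fin n → F) →ₗ[F] (Fin n → F))) ≃ₗ[Polynomial F]
        ((i : Fin r) → (j : Fin (len i)) →
          (Polynomial F ⧸ Ideal.span {f i ^ lam i j})))) :
    {W : Submodule F (Fin n → F) | Module.finrank F ↥W = 1 ∧ W.map T ≤ W}.ncard =
      ∑ i ∈ Finset.univ.filter (fun i : Fin r => (f i).natDegree = 1),
        qInt (Fintype.card F) (len i) := by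
  classical
  obtain ⟨e⟩ := hdecomp
  have hlines : ∀ a, Nat.card (ℙ F (T.eigenspace a)) =
      qInt (Fintype.card F) (∑ i, if f i = X - C a then len i else 0) := fun a => by
    rw [Fintype.card_eq_nat_card]
    exact card_projectivization_eq_qInt
      (card_eigenspace_of_equiv_pi_quotient T hmonic hirr hpos e a)
  rw [T.ncard_invariant_lines_eq_sum_card_projectivization,
    Finset.sum_congr rfl fun a _ => hlines a]
  exact sum_apply_sum_ite_eq_X_sub_C hmonic hdist len rfl
end

section
/- Let n≥2, let T be a linear operator on F_q^n with exactly s one-dimensional T-invariant subspaces, and let m be the Hessenberg function m=(m(1),n,n,…,n) with 1≤m(1)≤n and m(2)=n. Then the number of F_q-points of the Hessenberg variety H(m,T) equals [n-2]_q! · ( [n]_q·[m(1)-1]_q + q^{m(1)-1}·[n-m(1)]_q · s ). -/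
/-!
Fibre the flags over their first step `V 1 = L`. Flags through a line `L` are the flags of
`M ⧸ L` shifted by one step, so there are `[N-1]_q!` of them, and a line `U ≠ L` lies in
`V (k+1)` exactly when its image, again a line, lies in the `k`-th step of the quotient flag.
Induction on `k` then shows that a fixed line lies in `V k` for `[k]_q [N-1]_q!` flags.
If `T L ≤ L`, the Hessenberg condition `T L ≤ V m` is automatic on the fibre over `L`; otherwise
`T L` is a line other than `L` and the fibre has `[m-1]_q [N-2]_q!` points. Summing over the
`[N]_q` lines, `s` of which are invariant, gives the formula.
-/

open Module Submodule

theorem qInt_add (q a b : ℕ) : qInt q (a + b) = qInt q a + q ^ a * qInt q b := by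
  simp only [qInt, Finset.sum_range_add, Finset.mul_sum, pow_add]

theorem qInt_succ (q a : ℕ) : qInt q (a + 1) = 1 + q * qInt q a := by
  rw [add_comm, qInt_add]
  simp [qInt]

theorem qFact_succ (q k : ℕ) : qFact q (k + 1) = qFact q k * qInt q (k + 1) :=
  Finset.prod_range_succ _ _

theorem qFact_add_qInt_mul (q : ℕ) {N k : ℕ} (hk : k ≤ N) :
    qFact q N + (qInt q (N + 1) - 1) * (qInt q k * qFact q (N - 1)) =
      qInt q (k + 1) * qFact q N := by
  rw [qInt_succ, qInt_succ, Nat.add_sub_cancel_left]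
  cases N with
  | zero => simp [show k = 0 by omega, qInt]
  | succ N =>
    rw [Nat.add_sub_cancel, qFact_succ]
    ring

theorem Set.ncard_eq_sum_ncard_fiberwise {α β : Type*} {s : Set α} {t : Set β} {f : α → β}
    (hs : s.Finite) (ht : t.Finite) (h : Set.MapsTo f s t) :
    s.ncard = ∑ b ∈ ht.toFinset, {a ∈ s | f a = b}.ncard := by
  classical
  rw [Set.ncard_eq_toFinset_card s hs,
    Finset.card_eq_sum_card_fiberwise (t := ht.toFinset) (by simpa using h)]
  refine Finset.sum_congr rfl fun b _ => ?_
  rw [← Set.ncard_coe_finset]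
  congr
  ext
  simp

namespace FlagCount

variable (F : Type*) [Field F] (M : Type*) [AddCommGroup M] [Module F M]

def flags : Set (ℕ → Submodule F M) :=
  {V | V 0 = ⊥ ∧ V (finrank F M) = ⊤ ∧ (∀ i, V i ≤ V (i + 1)) ∧
    ∀ i ≤ finrank F M, finrank F (V i) = i}

def lines : Set (Submodule F M) := {W | finrank F W = 1}

variable {F M}

theorem ncard_lines [Fintype F] : (lines F M).ncard = qInt (Fintype.card F) (finrank F M) := by
  rw [← Nat.card_coe_set_eq, lines, Set.coe_ofPred,
    ← Nat.card_congr (Projectivization.equivSubmodule F M),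
    Projectivization.card_of_finrank F M rfl, Nat.card_eq_fintype_card]
  rfl

theorem map_mem_lines {N : Type*} [AddCommGroup N] [Module F N] {f : M →ₗ[F] N}
    {U : Submodule F M} (hU : U ∈ lines F M) (h : U.map f ≠ ⊥) : U.map f ∈ lines F N := by
  have : FiniteDimensional F U := Module.finite_of_finrank_eq_succ hU
  have hle : finrank F (U.map f) ≤ 1 := hU ▸ finrank_map_le f U
  have hne : finrank F (U.map f) ≠ 0 := fun h0 => h (finrank_eq_zero.mp h0)
  show finrank F (U.map f) = 1
  omega

theorem eq_of_le_of_mem_lines {U L : Submodule F M} (hU : U ∈ lines F M) (hL : L ∈ lines F M)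
    (h : U ≤ L) : U = L :=
  have : FiniteDimensional F L := Module.finite_of_finrank_eq_succ hL
  eq_of_le_of_finrank_eq h (hU.trans hL.symm)

theorem map_mkQ_mem_lines {L U : Submodule F M} (hU : U ∈ lines F M) (hUL : ¬U ≤ L) :
    U.map L.mkQ ∈ lines F (M ⧸ L) :=
  map_mem_lines hU fun h => hUL (by rwa [← ker_mkQ L, LinearMap.le_ker_iff_map])

theorem monotone_of_mem_flags {V : ℕ → Submodule F M} (hV : V ∈ flags F M) : Monotone V :=
  monotone_nat_of_le_succ hV.2.2.1

theorem eq_top_of_mem_flags {V : ℕ → Submodule F M} (hV : V ∈ flags F M) {i : ℕ}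
    (hi : finrank F M ≤ i) : V i = ⊤ :=
  top_le_iff.mp (hV.2.1 ▸ monotone_of_mem_flags hV hi)

section Quotient

variable (L : Submodule F M)

def quotFlag (V : ℕ → Submodule F M) (i : ℕ) : Submodule F (M ⧸ L) :=
  (V (i + 1)).map L.mkQ

def liftFlag (W : ℕ → Submodule F (M ⧸ L)) : ℕ → Submodule F M
  | 0 => ⊥
  | i + 1 => (W i).comap L.mkQ

variable {L}

theorem liftFlag_one {W : ℕ → Submodule F (M ⧸ L)} (hW : W ∈ flags F (M ⧸ L)) :
    liftFlag L W 1 = L := by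
  rw [liftFlag, hW.1, comap_bot, ker_mkQ]

theorem quotFlag_liftFlag (W : ℕ → Submodule F (M ⧸ L)) : quotFlag L (liftFlag L W) = W :=
  funext fun i => map_comap_eq_of_surjective L.mkQ_surjective (W i)

theorem liftFlag_quotFlag {V : ℕ → Submodule F M} (hV : V ∈ flags F M) (hV1 : V 1 = L) :
    liftFlag L (quotFlag L V) = V := by
  funext i
  cases i with
  | zero => exact hV.1.symm
  | succ i =>
    rw [liftFlag, quotFlag, comap_map_mkQ, sup_eq_right]
    exact hV1 ▸ monotone_of_mem_flags hV (by omega)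

theorem le_iff_map_mkQ_le_quotFlag {V : ℕ → Submodule F M} (hV : V ∈ flags F M) (hV1 : V 1 = L)
    (U : Submodule F M) (k : ℕ) : U ≤ V (k + 1) ↔ U.map L.mkQ ≤ quotFlag L V k := by
  rw [quotFlag, map_le_iff_le_comap, comap_map_mkQ, sup_eq_right.mpr]
  exact hV1 ▸ monotone_of_mem_flags hV (by omega)

variable [Module.Finite F M]

theorem finrank_map_mkQ_add_finrank {U : Submodule F M} (h : L ≤ U) :
    finrank F (U.map L.mkQ) + finrank F L = finrank F U := by
  have := LinearMap.finrank_range_add_finrank_ker (L.mkQ.domRestrict U)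
  rwa [LinearMap.range_domRestrict, LinearMap.ker_domRestrict, ker_mkQ,
    (comapSubtypeEquivOfLe h).finrank_eq] at this

theorem finrank_quotient_add_one (hL : L ∈ lines F M) : finrank F (M ⧸ L) + 1 = finrank F M :=
  hL ▸ L.finrank_quotient_add_finrank

theorem quotFlag_mem_flags (hL : L ∈ lines F M) {V : ℕ → Submodule F M} (hV : V ∈ flags F M)
    (hV1 : V 1 = L) : quotFlag L V ∈ flags F (M ⧸ L) := by
  have hLV : ∀ i, L ≤ V (i + 1) := fun i => hV1 ▸ monotone_of_mem_flags hV (by omega)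
  have hrk := finrank_quotient_add_one hL
  refine ⟨?_, ?_, fun i => map_mono (hV.2.2.1 (i + 1)), fun i hi => ?_⟩
  · rw [quotFlag, zero_add, hV1, mkQ_map_self]
  · rw [quotFlag, hrk, hV.2.1, Submodule.map_top, range_mkQ]
  · have := finrank_map_mkQ_add_finrank (hLV i)
    rw [hV.2.2.2 (i + 1) (by omega), hL] at this
    exact Nat.add_right_cancel this

theorem liftFlag_mem_flags (hL : L ∈ lines F M) {W : ℕ → Submodule F (M ⧸ L)}
    (hW : W ∈ flags F (M ⧸ L)) : liftFlag L W ∈ flags F M := by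
  have hrk := finrank_quotient_add_one hL
  refine ⟨rfl, ?_, fun i => ?_, fun i hi => ?_⟩
  · rw [← hrk, liftFlag, hW.2.1, comap_top]
  · cases i with
    | zero => exact bot_le
    | succ i => exact comap_mono (hW.2.2.1 i)
  · cases i with
    | zero => exact finrank_bot F M
    | succ i =>
      have := finrank_map_mkQ_add_finrank (le_comap_mkQ L (W i))
      rw [map_comap_eq_of_surjective L.mkQ_surjective, hW.2.2.2 i (by omega), hL] at this
      exact this.symm

theorem ncard_flags_fst_eq (hL : L ∈ lines F M) (U : Submodule F M) (k : ℕ) :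
    {V | V ∈ flags F M ∧ V 1 = L ∧ U ≤ V (k + 1)}.ncard =
      {W | W ∈ flags F (M ⧸ L) ∧ U.map L.mkQ ≤ W k}.ncard := by
  refine Set.BijOn.ncard_eq (f := quotFlag L) ⟨?_, ?_, ?_⟩
  · rintro V ⟨hV, hV1, hU⟩
    exact ⟨quotFlag_mem_flags hL hV hV1, (le_iff_map_mkQ_le_quotFlag hV hV1 U k).mp hU⟩
  · rintro V ⟨hV, hV1, -⟩ V' ⟨hV', hV1', -⟩ h
    rw [← liftFlag_quotFlag hV hV1, ← liftFlag_quotFlag hV' hV1', h]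
  · rintro W ⟨hW, hU⟩
    have hV := liftFlag_mem_flags hL hW
    have hV1 := liftFlag_one hW
    refine ⟨liftFlag L W, ⟨hV, hV1, ?_⟩, quotFlag_liftFlag W⟩
    rwa [le_iff_map_mkQ_le_quotFlag hV hV1, quotFlag_liftFlag]

end Quotient

section Finite

variable [Finite F] [Module.Finite F M]

theorem flags_finite : (flags F M).Finite := by
  have := Module.finite_of_finite F (M := M)
  refine Set.Finite.of_finite_image (f := fun V (i : Fin (finrank F M + 1)) => V i)
    (Set.toFinite _) fun V hV V' hV' h => funext fun i => ?_
  rcases le_or_gt i (finrank F M) with hi | hi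
  · exact congrFun h ⟨i, Nat.lt_succ_of_le hi⟩
  · rw [eq_top_of_mem_flags hV hi.le, eq_top_of_mem_flags hV' hi.le]

theorem lines_finite : (lines F M).Finite :=
  have := Module.finite_of_finite F (M := M)
  Set.toFinite _

theorem ncard_flags_eq_sum_fst (P : (ℕ → Submodule F M) → Prop) (hM : 1 ≤ finrank F M) :
    {V | V ∈ flags F M ∧ P V}.ncard =
      ∑ L ∈ lines_finite.toFinset, {V | V ∈ flags F M ∧ V 1 = L ∧ P V}.ncard := by
  rw [Set.ncard_eq_sum_ncard_fiberwise (flags_finite.subset fun V hV => hV.1) lines_finite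
    fun V hV => hV.1.2.2.2 1 hM]
  refine Finset.sum_congr rfl fun L _ => congrArg Set.ncard (Set.ext fun V => ?_)
  simp only [Set.mem_ofPred_eq]
  tauto

end Finite

section Count

variable [Fintype F] [Module.Finite F M]

theorem card_toFinset_lines :
    (lines_finite (F := F) (M := M)).toFinset.card = qInt (Fintype.card F) (finrank F M) := by
  rw [← Set.ncard_eq_toFinset_card _ lines_finite, ncard_lines]

theorem ncard_flags : (flags F M).ncard = qFact (Fintype.card F) (finrank F M) := by
  obtain ⟨N, hN⟩ : ∃ N, finrank F M = N := ⟨_, rfl⟩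
  induction N generalizing M with
  | zero =>
    have : Subsingleton M := finrank_zero_iff.mp hN
    have hflags : flags F M = {fun _ => ⊥} := by
      refine Set.eq_singleton_iff_unique_mem.mpr
        ⟨⟨rfl, Subsingleton.elim _ _, fun _ => le_rfl, fun i hi => ?_⟩,
          fun V _ => funext fun _ => Subsingleton.elim _ _⟩
      simp [show i = 0 by omega]
    rw [hflags, Set.ncard_singleton, hN]
    rfl
  | succ N ih =>
    have hfib : ∀ L ∈ lines_finite.toFinset,
        {V | V ∈ flags F M ∧ V 1 = L}.ncard = qFact (Fintype.card F) N := by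
      intro L hL
      rw [Set.Finite.mem_toFinset] at hL
      have := ncard_flags_fst_eq hL ⊥ 0
      simp only [bot_le, and_true, Submodule.map_bot, Set.ofPred_mem_eq] at this
      have hQ : finrank F (M ⧸ L) = N := by have := finrank_quotient_add_one hL; omega
      rw [this, ih hQ, hQ]
    have := ncard_flags_eq_sum_fst (M := M) (fun _ => True) (by rw [hN]; omega)
    simp only [and_true, Set.ofPred_mem_eq] at this
    rw [this, Finset.sum_congr rfl hfib, Finset.sum_const, card_toFinset_lines, smul_eq_mul, hN,
      qFact_succ, mul_comm]

theorem ncard_flags_fst_eq_of_le {L U : Submodule F M} (hL : L ∈ lines F M) (hUL : U ≤ L)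
    (k : ℕ) : {V | V ∈ flags F M ∧ V 1 = L ∧ U ≤ V (k + 1)}.ncard =
      qFact (Fintype.card F) (finrank F M - 1) := by
  have hU : U.map L.mkQ = ⊥ := by rwa [← LinearMap.le_ker_iff_map, ker_mkQ]
  rw [ncard_flags_fst_eq hL, hU]
  simp only [bot_le, and_true, Set.ofPred_mem_eq]
  rw [ncard_flags, finrank_quotient, hL]

theorem ncard_flags_le_of_mem_lines {U : Submodule F M} (hU : U ∈ lines F M) {k : ℕ}
    (hk : k ≤ finrank F M) : {V | V ∈ flags F M ∧ U ≤ V k}.ncard =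
      qInt (Fintype.card F) k * qFact (Fintype.card F) (finrank F M - 1) := by
  induction k generalizing M with
  | zero =>
    have hU0 : U ≠ ⊥ := fun h => by simp [lines, h] at hU
    have : {V | V ∈ flags F M ∧ U ≤ V 0} = ∅ :=
      Set.eq_empty_of_forall_notMem fun V ⟨hV, hUV⟩ => hU0 (le_bot_iff.mp (hV.1 ▸ hUV))
    simp [this, qInt]
  | succ k ih =>
    obtain ⟨N, hN⟩ : ∃ N, finrank F M = N + 1 := ⟨finrank F M - 1, by omega⟩
    have hfib : ∀ L ∈ lines_finite.toFinset,
        {V | V ∈ flags F M ∧ V 1 = L ∧ U ≤ V (k + 1)}.ncard =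
          if L = U then qFact (Fintype.card F) N
          else qInt (Fintype.card F) k * qFact (Fintype.card F) (N - 1) := by
      intro L hL
      rw [Set.Finite.mem_toFinset] at hL
      have hQ : finrank F (M ⧸ L) = N := by have := finrank_quotient_add_one hL; omega
      split_ifs with hLU
      · rw [← hLU, ncard_flags_fst_eq_of_le hL le_rfl, hN, Nat.add_sub_cancel]
      · have hUL : ¬U ≤ L := fun h => hLU (eq_of_le_of_mem_lines hU hL h).symm
        rw [ncard_flags_fst_eq hL, ih (map_mkQ_mem_lines hU hUL) (by omega), hQ]
    have hUmem : U ∈ lines_finite.toFinset := (Set.Finite.mem_toFinset _).mpr hU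
    rw [ncard_flags_eq_sum_fst _ (by omega), Finset.sum_congr rfl hfib, Finset.sum_ite,
      Finset.filter_eq', Finset.filter_ne', if_pos hUmem, Finset.sum_singleton, Finset.sum_const,
      Finset.card_erase_of_mem hUmem, card_toFinset_lines, smul_eq_mul, hN, Nat.add_sub_cancel,
      qFact_add_qInt_mul _ (by omega)]

theorem ncard_flags_fst_eq_of_not_le {L U : Submodule F M} (hL : L ∈ lines F M)
    (hU : U ∈ lines F M) (hUL : ¬U ≤ L) {k : ℕ} (hk : k < finrank F M) :
    {V | V ∈ flags F M ∧ V 1 = L ∧ U ≤ V (k + 1)}.ncard =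
      qInt (Fintype.card F) k * qFact (Fintype.card F) (finrank F M - 2) := by
  have hQ := finrank_quotient_add_one hL
  rw [ncard_flags_fst_eq hL, ncard_flags_le_of_mem_lines (map_mkQ_mem_lines hU hUL) (by omega)]
  congr 2
  omega

theorem ncard_flags_map_fst_le (T : M →ₗ[F] M) {m : ℕ} (hm : 1 ≤ m) (hmM : m ≤ finrank F M)
    (hM : 2 ≤ finrank F M) :
    {V | V ∈ flags F M ∧ (V 1).map T ≤ V m}.ncard =
      qFact (Fintype.card F) (finrank F M - 2) *
        (qInt (Fintype.card F) (finrank F M) * qInt (Fintype.card F) (m - 1) +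
          Fintype.card F ^ (m - 1) * qInt (Fintype.card F) (finrank F M - m) *
            {L | L ∈ lines F M ∧ L.map T ≤ L}.ncard) := by
  classical
  set q := Fintype.card F
  set N := finrank F M
  obtain ⟨k, rfl⟩ : ∃ k, m = k + 1 := ⟨m - 1, by omega⟩
  have hfib : ∀ L ∈ lines_finite.toFinset,
      {V | V ∈ flags F M ∧ V 1 = L ∧ (V 1).map T ≤ V (k + 1)}.ncard =
        qInt q k * qFact q (N - 2) +
          if L.map T ≤ L then q ^ k * qInt q (N - (k + 1)) * qFact q (N - 2) else 0 := by
    intro L hL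
    rw [Set.Finite.mem_toFinset] at hL
    have hfix : {V | V ∈ flags F M ∧ V 1 = L ∧ (V 1).map T ≤ V (k + 1)} =
        {V | V ∈ flags F M ∧ V 1 = L ∧ L.map T ≤ V (k + 1)} := by
      ext V
      constructor <;> rintro ⟨hV, rfl, hT⟩ <;> exact ⟨hV, rfl, hT⟩
    rw [hfix]
    split_ifs with hT
    · have hsplit : N - 1 = (N - 2) + 1 := by omega
      rw [ncard_flags_fst_eq_of_le hL hT, hsplit, qFact_succ,
        show N - 2 + 1 = k + (N - (k + 1)) by omega, qInt_add]
      ring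
    · have hTL : L.map T ∈ lines F M := map_mem_lines hL fun h => hT (h ▸ bot_le)
      rw [ncard_flags_fst_eq_of_not_le hL hTL hT (by omega), add_zero]
  have hinv : (lines_finite.toFinset.filter fun L => L.map T ≤ L).card =
      {L | L ∈ lines F M ∧ L.map T ≤ L}.ncard := by
    rw [← Set.ncard_coe_finset]
    congr
    ext
    simp
  rw [ncard_flags_eq_sum_fst _ (by omega), Finset.sum_congr rfl hfib, Finset.sum_add_distrib,
    Finset.sum_const, card_toFinset_lines, ← Finset.sum_filter, Finset.sum_const, hinv,
    smul_eq_mul, smul_eq_mul, Nat.add_sub_cancel]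
  ring

end Count

theorem hess_eq_setOf_map_fst_le {F : Type} [Field F] {n : ℕ} (hn : 1 ≤ n)
    (T : Module.End F (Fin n → F)) (m1 : ℕ) : Hess F n (fun i => if i = 1 then m1 else n) T =
      {V | V ∈ flags F (Fin n → F) ∧ (V 1).map T ≤ V m1} := by
  have hflag : ∀ V, IsFlag F n V ↔ V ∈ flags F (Fin n → F) := by
    simp [IsFlag, flags]
  ext V
  simp only [Hess, Set.mem_ofPred_eq, hflag]
  refine ⟨fun ⟨hV, h⟩ => ⟨hV, by simpa using h 1 le_rfl hn⟩,
    fun ⟨hV, h⟩ => ⟨hV, fun i _ _ => ?_⟩⟩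
  split_ifs with hi
  · exact hi ▸ h
  · rw [eq_top_of_mem_flags hV (finrank_fin_fun F).le]
    exact le_top

end FlagCount

/-- For the Hessenberg function `m = (m 1, n, n, …, n)` and an operator `T` with exactly
`s` one-dimensional invariant subspaces,
`|H(m,T)| = [n-2]_q! ⬝ ([n]_q [m(1)-1]_q + q^(m(1)-1) [n-m(1)]_q ⬝ s)`. -/
theorem stmt4 (F : Type) [Field F] [Fintype F] (n : ℕ) (hn : 2 ≤ n)
    (T : Module.End F (Fin n → F)) (m1 : ℕ) (hm1 : 1 ≤ m1) (hm1n : m1 ≤ n)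
    (s : ℕ)
    (hs : {W : Submodule F (Fin n → F) | Module.finrank F ↥W = 1 ∧ W.map T ≤ W}.ncard = s) :
    (Hess F n (fun i => if i = 1 then m1 else n) T).ncard =
      qFact (Fintype.card F) (n - 2) *
        (qInt (Fintype.card F) n * qInt (Fintype.card F) (m1 - 1) +
          (Fintype.card F) ^ (m1 - 1) * qInt (Fintype.card F) (n - m1) * s) := by
  have hrk : finrank F (Fin n → F) = n := finrank_fin_fun F
  rw [FlagCount.hess_eq_setOf_map_fst_le (by omega),
    FlagCount.ncard_flags_map_fst_le T hm1 (by rwa [hrk]) (by rwa [hrk]), hrk, ← hs]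
  rfl
end

section
/- Let m_0, m_1, m_2 be Hessenberg functions on [n] satisfying condition (1) of the modular law at index i (that is: m_1(i-1) < m_1(i) < m_1(i+1), m_1(m_1(i)) = m_1(m_1(i)+1), and for k∈{0,2}, m_k(j)=m_1(j) for j≠i while m_k(i)=m_1(i)-1+k). Then for every linear operator T on F_q^n, the point counts satisfy (1+q)·|H(m_1,T)| = q·|H(m_0,T)| + |H(m_2,T)|. -/
open Module Submodule Function

lemma ncard_eq_ncard_mul_of_ncard_fiber {α β : Type*} {s : Set α} {t : Set β} {f : α → β}
    {k : ℕ} (hs : s.Finite) (ht : t.Finite) (hf : Set.MapsTo f s t)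
    (hk : ∀ b ∈ t, {a ∈ s | f a = b}.ncard = k) :
    s.ncard = t.ncard * k := by
  classical
  rw [Set.ncard_eq_toFinset_card _ hs, Set.ncard_eq_toFinset_card _ ht,
    Finset.card_eq_sum_card_fiberwise (f := f) (t := ht.toFinset) (by simpa using hf),
    Finset.sum_const_nat fun b hb => ?_]
  rw [← hk b (by simpa using hb), ← Set.ncard_coe_finset]
  congr 1
  ext a
  simp

section LinearAlgebra

variable {F E : Type*} [Field F] [AddCommGroup E] [Module F E] [FiniteDimensional F E]

lemma sup_span_singleton_eq_iff {P W : Submodule F E} (hPW : P ≤ W)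
    (hW : finrank F W = finrank F P + 1) {w : E} :
    P ⊔ span F {w} = W ↔ w ∈ W ∧ w ∉ P := by
  constructor
  · rintro rfl
    refine ⟨mem_sup_right (mem_span_singleton_self w), fun hw => ?_⟩
    rw [sup_eq_left.2 ((span_singleton_le_iff_mem w P).2 hw)] at hW
    omega
  · rintro ⟨hwW, hwP⟩
    exact eq_of_le_of_finrank_le (sup_le hPW ((span_singleton_le_iff_mem w W).2 hwW))
      (by rw [finrank_sup_span_singleton hwP, hW])

lemma finrank_sup_map_eq_succ {E' : Type*} [AddCommGroup E'] [Module F E']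
    [FiniteDimensional F E'] (T : E →ₗ[F] E') {P Q : Submodule F E} {R : Submodule F E'}
    (hPQ : P ≤ Q) (hQ : finrank F Q = finrank F P + 1) (hP : P.map T ≤ R)
    (hQR : ¬Q.map T ≤ R) :
    finrank F ↥(R ⊔ Q.map T) = finrank F R + 1 := by
  obtain ⟨v, hvQ, hvP⟩ := SetLike.exists_of_lt (lt_of_le_of_ne hPQ (by rintro rfl; omega))
  have hmapQ : Q.map T = P.map T ⊔ span F {T v} := by
    rw [← (sup_span_singleton_eq_iff hPQ hQ).2 ⟨hvQ, hvP⟩, Submodule.map_sup, map_span,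
      Set.image_singleton]
  have hTv : T v ∉ R := fun hTv =>
    hQR (hmapQ ▸ sup_le hP ((span_singleton_le_iff_mem _ R).2 hTv))
  rw [hmapQ, ← sup_assoc, sup_eq_left.2 hP, finrank_sup_span_singleton hTv]

lemma ncard_coe_submodule (W : Submodule F E) :
    (W : Set E).ncard = Nat.card F ^ finrank F W := by
  rw [← Nat.card_coe_set_eq]
  exact natCard_eq_pow_finrank (V := W)

lemma mapsTo_sup_span_singleton {P₁ P₂ P₃ : Submodule F E} (h₁₂ : P₁ ≤ P₂) (h₂₃ : P₂ ≤ P₃)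
    (h₁₃ : finrank F P₃ = finrank F P₁ + 2) :
    Set.MapsTo (fun v => P₁ ⊔ span F {v}) ((P₃ : Set E) \ P₂) {W | P₁ < W ∧ W < P₃ ∧ W ≠ P₂} := by
  rintro v ⟨hv₃, hv₂⟩
  simp only [Set.mem_ofPred_eq]
  have hv₁ : v ∉ P₁ := fun hv => hv₂ (h₁₂ hv)
  have hmem : v ∈ P₁ ⊔ span F {v} := mem_sup_right (mem_span_singleton_self v)
  have hrank := finrank_sup_span_singleton hv₁
  refine ⟨left_lt_sup.2 fun hv => hv₁ (hv (mem_span_singleton_self v)), ?_,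
    fun h => hv₂ (h ▸ hmem)⟩
  refine lt_of_le_of_ne (sup_le (h₁₂.trans h₂₃) ((span_singleton_le_iff_mem v _).2 hv₃))
    fun h => ?_
  rw [h] at hrank
  omega

lemma setOf_sup_span_singleton_eq {P₁ P₂ P₃ W : Submodule F E} (h₁₂ : P₁ ≤ P₂)
    (hP₂ : finrank F P₂ = finrank F P₁ + 1) (hW₁ : P₁ ≤ W) (hW₃ : W ≤ P₃)
    (hW : finrank F W = finrank F P₁ + 1) (hW₂ : W ≠ P₂) :
    {v ∈ (P₃ : Set E) \ P₂ | P₁ ⊔ span F {v} = W} = (W : Set E) \ P₁ := by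
  ext v
  simp only [Set.mem_ofPred_eq, Set.mem_sdiff, SetLike.mem_coe, sup_span_singleton_eq_iff hW₁ hW]
  refine ⟨fun h => h.2, fun ⟨hvW, hv₁⟩ => ⟨⟨hW₃ hvW, fun hv₂ => hW₂ ?_⟩, hvW, hv₁⟩⟩
  rw [← (sup_span_singleton_eq_iff hW₁ hW).2 ⟨hvW, hv₁⟩]
  exact eq_of_le_of_finrank_le (sup_le h₁₂ ((span_singleton_le_iff_mem v _).2 hv₂))
    (by rw [hP₂, finrank_sup_span_singleton hv₁])

variable [Finite F]

lemma ncard_coe_sdiff_coe {P Q : Submodule F E} (h : P ≤ Q) :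
    ((Q : Set E) \ P).ncard = Nat.card F ^ finrank F Q - Nat.card F ^ finrank F P := by
  have : Finite E := Module.finite_of_finite F
  rw [Set.ncard_sdiff (by exact_mod_cast h), ncard_coe_submodule, ncard_coe_submodule]

/-- Each such `W` is `P₁ ⊔ span {v}` for exactly the `q^(r+1) - q^r` vectors `v ∈ W \ P₁`,
where `r = dim P₁`, and the `v ∈ P₃ \ P₂` are the vectors that give some `W ≠ P₂`. -/
lemma ncard_setOf_lt_lt_ne {P₁ P₂ P₃ : Submodule F E} (h₁₂ : P₁ < P₂) (h₂₃ : P₂ < P₃)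
    (h₁₃ : finrank F P₃ = finrank F P₁ + 2) :
    {W | P₁ < W ∧ W < P₃ ∧ W ≠ P₂}.ncard = Nat.card F := by
  set q := Nat.card F
  set r := finrank F P₁
  have finrank_between {W : Submodule F E} (h₁ : P₁ < W) (h₃ : W < P₃) : finrank F W = r + 1 := by
    have := finrank_lt_finrank_of_lt h₁
    have := finrank_lt_finrank_of_lt h₃
    omega
  have hP₂ := finrank_between h₁₂ h₂₃
  have hfiber : ∀ W ∈ {W | P₁ < W ∧ W < P₃ ∧ W ≠ P₂},
      {v ∈ (P₃ : Set E) \ P₂ | P₁ ⊔ span F {v} = W}.ncard = q ^ (r + 1) - q ^ r := by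
    rintro W ⟨hW₁, hW₃, hW₂⟩
    have hW := finrank_between hW₁ hW₃
    rw [setOf_sup_span_singleton_eq h₁₂.le hP₂ hW₁.le hW₃.le hW hW₂, ncard_coe_sdiff_coe hW₁.le, hW]
  have : Finite E := Module.finite_of_finite F
  have hcount := ncard_eq_ncard_mul_of_ncard_fiber (Set.toFinite _) (Set.toFinite _)
    (mapsTo_sup_span_singleton h₁₂.le h₂₃.le h₁₃) hfiber
  have hpos : 0 < q ^ (r + 1) - q ^ r :=
    Nat.sub_pos_of_lt (Nat.pow_lt_pow_right Finite.one_lt_card r.lt_succ_self)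
  rw [ncard_coe_sdiff_coe h₂₃.le, h₁₃, hP₂,
    show q ^ (r + 2) - q ^ (r + 1) = q * (q ^ (r + 1) - q ^ r) by
      rw [Nat.mul_sub, ← pow_succ', ← pow_succ']] at hcount
  exact (Nat.eq_of_mul_eq_mul_right hpos hcount).symm

end LinearAlgebra

namespace IsFlag

variable {F : Type} [Field F] {n : ℕ} {V : ℕ → Submodule F (Fin n → F)}

lemma monotone (hV : IsFlag F n V) : Monotone V :=
  monotone_nat_of_le_succ hV.2.2.1

lemma finrank_eq (hV : IsFlag F n V) {j : ℕ} (hj : j ≤ n) : finrank F (V j) = j :=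
  hV.2.2.2 j hj

lemma apply_lt_apply (hV : IsFlag F n V) {a b : ℕ} (hab : a < b) (hb : b ≤ n) : V a < V b := by
  refine lt_of_le_of_ne (hV.monotone hab.le) fun h => ?_
  have := hV.finrank_eq (hab.le.trans hb)
  rw [h, hV.finrank_eq hb] at this
  omega

lemma update (hV : IsFlag F n V) {k : ℕ} (hk : 1 ≤ k) (hkn : k < n) {W : Submodule F (Fin n → F)}
    (h₁ : V (k - 1) < W) (h₂ : W < V (k + 1)) : IsFlag F n (update V k W) := by
  have hW : finrank F W = k := by
    have := finrank_lt_finrank_of_lt h₁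
    have := finrank_lt_finrank_of_lt h₂
    rw [hV.finrank_eq (by omega)] at *
    omega
  refine ⟨?_, ?_, fun j => ?_, fun j hj => ?_⟩
  · rw [update_of_ne (by omega)]; exact hV.1
  · rw [update_of_ne (by omega)]; exact hV.2.1
  · rcases eq_or_ne j k with rfl | hjk
    · rw [update_self, update_of_ne (by omega)]; exact h₂.le
    rw [update_of_ne hjk]
    rcases eq_or_ne (j + 1) k with hjk' | hjk'
    · rw [hjk', update_self, show j = k - 1 by omega]; exact h₁.le
    · rw [update_of_ne hjk']; exact hV.2.2.1 j
  · rcases eq_or_ne j k with rfl | hjk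
    · rw [update_self, hW]
    · rw [update_of_ne hjk]; exact hV.finrank_eq hj

end IsFlag

lemma finite_setOf_isFlag (F : Type) [Field F] [Finite F] (n : ℕ) :
    {V | IsFlag F n V}.Finite := by
  refine (Set.finite_range fun (W : Fin (n + 1) → Submodule F (Fin n → F)) (j : ℕ) =>
    if h : j ≤ n then W ⟨j, by omega⟩ else ⊤).subset fun V hV => ⟨fun j => V j, funext fun j => ?_⟩
  by_cases hj : j ≤ n
  · simp [hj]
  · have := hV.monotone (show n ≤ j by omega)
    rw [hV.2.1, top_le_iff] at this
    simp [hj, this]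

section Hessenberg

variable {F : Type} [Field F] {n : ℕ} {T : Module.End F (Fin n → F)} {μ μ' : ℕ → ℕ}
  {V : ℕ → Submodule F (Fin n → F)}

lemma Hess_finite [Finite F] (n : ℕ) (μ : ℕ → ℕ) (T : Module.End F (Fin n → F)) :
    (Hess F n μ T).Finite :=
  (finite_setOf_isFlag F n).subset fun _ hV => hV.1

lemma Hess_subset_Hess (h : ∀ j, μ j ≤ μ' j) : Hess F n μ T ⊆ Hess F n μ' T :=
  fun _ ⟨hV, hVT⟩ => ⟨hV, fun j hj hjn => (hVT j hj hjn).trans (hV.monotone (h j))⟩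

lemma map_le_of_mem_Hess (hV : V ∈ Hess F n μ T) {j : ℕ} (hj : j ≤ n) :
    (V j).map T ≤ V (μ j) := by
  rcases Nat.eq_zero_or_pos j with rfl | hj₀
  · simp [hV.1.1]
  · exact hV.2 j hj₀ hj

lemma mem_Hess_iff_of_eq_of_ne {i : ℕ} (hi : 1 ≤ i) (hin : i ≤ n) (hV : V ∈ Hess F n μ T)
    (hμ : ∀ j ≠ i, μ' j = μ j) : V ∈ Hess F n μ' T ↔ (V i).map T ≤ V (μ' i) := by
  refine ⟨fun hV' => hV'.2 i hi hin, fun hVi => ⟨hV.1, fun j hj hjn => ?_⟩⟩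
  rcases eq_or_ne j i with rfl | hji
  · exact hVi
  · rw [hμ j hji]; exact hV.2 j hj hjn

lemma Hess_update_pred_subset (μ : ℕ → ℕ) (i : ℕ) :
    Hess F n (update μ i (μ i - 1)) T ⊆ Hess F n μ T :=
  Hess_subset_Hess fun j => by rcases eq_or_ne j i with rfl | hj <;> simp [*]

lemma Hess_subset_update_succ (μ : ℕ → ℕ) (i : ℕ) :
    Hess F n μ T ⊆ Hess F n (update μ i (μ i + 1)) T :=
  Hess_subset_Hess fun j => by rcases eq_or_ne j i with rfl | hj <;> simp [*]

lemma update_mem_Hess (hV : IsFlag F n V) {k : ℕ} (hk : 1 ≤ k) (hkn : k < n)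
    {W : Submodule F (Fin n → F)} (h₁ : V (k - 1) < W) (h₂ : W < V (k + 1))
    (hμk : k < μ k) (hμ : μ k = μ (k + 1))
    (hVT : ∀ j, 1 ≤ j → j ≤ n → μ j ≠ k → (V j).map T ≤ V (μ j))
    (hW : ∀ j, 1 ≤ j → j ≤ n → μ j = k → (V j).map T ≤ W) :
    update V k W ∈ Hess F n μ T := by
  refine ⟨hV.update hk hkn h₁ h₂, fun j hj hjn => ?_⟩
  rcases eq_or_ne j k with rfl | hjk
  · rw [update_self, update_of_ne hμk.ne', hμ]
    exact (map_mono h₂.le).trans (hVT (j + 1) (by omega) hkn (hμ ▸ hμk.ne'))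
  rw [update_of_ne hjk]
  rcases eq_or_ne (μ j) k with hμj | hμj
  · rw [hμj, update_self]; exact hW j hj hjn hμj
  · rw [update_of_ne hμj]; exact hVT j hj hjn hμj

end Hessenberg

/-- What the modular law at `i` needs of `m = m₁`; there `m₀ = update m i (m i - 1)` and
`m₂ = update m i (m i + 1)`. -/
structure ModularIndex (n : ℕ) (m : ℕ → ℕ) (i : ℕ) : Prop where
  one_le : 1 ≤ i
  lt_apply : i < m i
  apply_lt : m i < n
  apply_pred_lt : m (i - 1) < m i
  eq_of_apply_eq : ∀ j, 1 ≤ j → j ≤ n → m j = m i → j = i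
  lt_apply_apply : m i < m (m i)
  apply_apply_eq : m (m i) = m (m i + 1)

lemma ModularIndex.of_isHess {n : ℕ} {m : ℕ → ℕ} {i : ℕ} (h₀ : IsHess n (update m i (m i - 1)))
    (h₁ : IsHess n m) (hi : 1 ≤ i) (hin : i ≤ n - 1) (ha : m (i - 1) < m i)
    (hb : m i < m (i + 1)) (hc : m (m i) = m (m i + 1)) : ModularIndex n m i := by
  have hi₀ := (h₀.1 i hi (by omega)).1
  rw [update_self] at hi₀
  have hsucc := (h₁.1 (i + 1) (by omega) (by omega)).2
  refine ⟨hi, by omega, by omega, ha, fun j hj hjn hji => ?_, ?_, hc⟩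
  · by_contra hne
    rcases lt_or_gt_of_ne hne with hlt | hgt
    · have := h₁.2 j (i - 1) hj (by omega) (by omega)
      omega
    · have := h₁.2 (i + 1) j (by omega) hgt hjn
      omega
  · have := h₁.2 (i + 1) (m i) (by omega) (by omega) (by omega)
    omega

def replaceBySupMap {F : Type} [Field F] {n : ℕ} (T : Module.End F (Fin n → F)) (i k : ℕ)
    (V : ℕ → Submodule F (Fin n → F)) : ℕ → Submodule F (Fin n → F) :=
  update V k (V (k - 1) ⊔ (V i).map T)

namespace ModularIndex

variable {F : Type} [Field F] {n : ℕ} {T : Module.End F (Fin n → F)} {m : ℕ → ℕ} {i : ℕ}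
  {V : ℕ → Submodule F (Fin n → F)}

lemma mem_Hess_iff (h : ModularIndex n m i) (hV : V ∈ Hess F n (update m i (m i + 1)) T) :
    V ∈ Hess F n m T ↔ (V i).map T ≤ V (m i) := by
  have := h.lt_apply; have := h.apply_lt
  exact mem_Hess_iff_of_eq_of_ne h.one_le (by omega) hV fun j hj => (update_of_ne hj _ _).symm

lemma mem_Hess_pred_iff (h : ModularIndex n m i) (hV : V ∈ Hess F n m T) :
    V ∈ Hess F n (update m i (m i - 1)) T ↔ (V i).map T ≤ V (m i - 1) := by
  have := h.lt_apply; have := h.apply_lt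
  rw [mem_Hess_iff_of_eq_of_ne h.one_le (by omega) hV fun j hj => update_of_ne hj _ _, update_self]

lemma finrank_sup_map (h : ModularIndex n m i) (hV : V ∈ Hess F n (update m i (m i + 1)) T)
    (hTV : ¬(V i).map T ≤ V (m i - 1)) : finrank F ↥(V (m i - 1) ⊔ (V i).map T) = m i := by
  have := h.one_le; have := h.lt_apply; have := h.apply_lt; have := h.apply_pred_lt
  have hprev : (V (i - 1)).map T ≤ V (m i - 1) := by
    have := map_le_of_mem_Hess hV (j := i - 1) (by omega)
    rw [update_of_ne (by omega)] at this
    exact this.trans (hV.1.monotone (by omega))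
  rw [finrank_sup_map_eq_succ T (hV.1.monotone (Nat.sub_le i 1))
    (by rw [hV.1.finrank_eq (by omega), hV.1.finrank_eq (by omega)]; omega) hprev hTV,
    hV.1.finrank_eq (by omega)]
  omega

lemma mapsTo_replaceBySupMap (h : ModularIndex n m i) :
    Set.MapsTo (replaceBySupMap T i (m i))
      (Hess F n (update m i (m i + 1)) T \ Hess F n m T)
      (Hess F n m T \ Hess F n (update m i (m i - 1)) T) := by
  have := h.one_le; have := h.lt_apply; have := h.apply_lt
  rintro V ⟨hVX, hVA⟩
  have hTV : ¬(V i).map T ≤ V (m i - 1) := fun hle =>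
    hVA ((h.mem_Hess_iff hVX).2 (hle.trans (hVX.1.monotone (Nat.sub_le _ 1))))
  have hrank := h.finrank_sup_map hVX hTV
  have hle : V (m i - 1) ⊔ (V i).map T ≤ V (m i + 1) := by
    refine sup_le (hVX.1.monotone (by omega)) ?_
    simpa using map_le_of_mem_Hess hVX (j := i) (by omega)
  have hlt : V (m i - 1) ⊔ (V i).map T < V (m i + 1) := lt_of_le_of_ne hle fun heq => by
    rw [heq, hVX.1.finrank_eq (by omega)] at hrank
    omega
  have hmem : replaceBySupMap T i (m i) V ∈ Hess F n m T := by
    refine update_mem_Hess hVX.1 (by omega) h.apply_lt (left_lt_sup.2 hTV) hlt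
      h.lt_apply_apply h.apply_apply_eq (fun j hj hjn hmj => ?_) (fun j hj hjn hmj => ?_)
    · have hji : j ≠ i := fun hji => hmj (hji ▸ rfl)
      simpa [hji] using hVX.2 j hj hjn
    · rw [h.eq_of_apply_eq j hj hjn hmj]
      exact le_sup_right
  refine ⟨hmem, fun hB => hTV ?_⟩
  have := (h.mem_Hess_pred_iff hmem).1 hB
  simpa [replaceBySupMap, update_of_ne (show i ≠ m i by omega),
    update_of_ne (show m i - 1 ≠ m i by omega)] using this

lemma sup_map_eq (h : ModularIndex n m i)
    (hV : V ∈ Hess F n m T \ Hess F n (update m i (m i - 1)) T) :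
    V (m i - 1) ⊔ (V i).map T = V (m i) := by
  have := h.lt_apply; have := h.apply_lt
  obtain ⟨hVA, hVB⟩ := hV
  have hVX := Hess_subset_update_succ m i hVA
  have hTV : ¬(V i).map T ≤ V (m i - 1) := fun hle => hVB ((h.mem_Hess_pred_iff hVA).2 hle)
  refine eq_of_le_of_finrank_le
    (sup_le (hVA.1.monotone (Nat.sub_le _ 1)) ((h.mem_Hess_iff hVX).1 hVA)) ?_
  rw [h.finrank_sup_map hVX hTV, hVA.1.finrank_eq (by omega)]

lemma update_mem_Hess_sdiff (h : ModularIndex n m i)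
    (hV : V ∈ Hess F n m T \ Hess F n (update m i (m i - 1)) T) {W : Submodule F (Fin n → F)}
    (hW₁ : V (m i - 1) < W) (hW₂ : W < V (m i + 1)) (hWne : W ≠ V (m i)) :
    update V (m i) W ∈ Hess F n (update m i (m i + 1)) T \ Hess F n m T := by
  have := h.one_le; have := h.lt_apply; have := h.apply_lt
  have hVA := hV.1
  have hne : ∀ j, 1 ≤ j → j ≤ n → update m i (m i + 1) j ≠ m i := fun j hj hjn => by
    rcases eq_or_ne j i with rfl | hji
    · simp
    · rw [update_of_ne hji]; exact fun hmj => hji (h.eq_of_apply_eq j hj hjn hmj)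
  have hWX : update V (m i) W ∈ Hess F n (update m i (m i + 1)) T := by
    refine update_mem_Hess hVA.1 (by omega) h.apply_lt hW₁ hW₂ ?_ ?_
      (fun j hj hjn _ => (Hess_subset_update_succ m i hVA).2 j hj hjn)
      (fun j hj hjn hj' => absurd hj' (hne j hj hjn))
    · rw [update_of_ne (by omega)]; exact h.lt_apply_apply
    · rw [update_of_ne (by omega), update_of_ne (by omega)]; exact h.apply_apply_eq
  refine ⟨hWX, fun hWA => hWne ?_⟩
  have hTW := (h.mem_Hess_iff hWX).1 hWA
  rw [update_of_ne (by omega), update_self] at hTW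
  have hWrank : finrank F W = m i := by
    have := finrank_lt_finrank_of_lt hW₁
    have := finrank_lt_finrank_of_lt hW₂
    rw [hVA.1.finrank_eq (by omega)] at *
    omega
  refine (eq_of_le_of_finrank_le (h.sup_map_eq hV ▸ sup_le hW₁.le hTW) ?_).symm
  rw [hWrank, hVA.1.finrank_eq (by omega)]

lemma setOf_replaceBySupMap_eq (h : ModularIndex n m i) {y : ℕ → Submodule F (Fin n → F)}
    (hy : y ∈ Hess F n m T \ Hess F n (update m i (m i - 1)) T) :
    {V ∈ Hess F n (update m i (m i + 1)) T \ Hess F n m T | replaceBySupMap T i (m i) V = y} =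
      update y (m i) '' {W | y (m i - 1) < W ∧ W < y (m i + 1) ∧ W ≠ y (m i)} := by
  have := h.one_le; have := h.lt_apply; have := h.apply_lt
  ext V
  constructor
  · rintro ⟨⟨hVX, hVA⟩, rfl⟩
    have hVm : replaceBySupMap T i (m i) V (m i) = V (m i - 1) ⊔ (V i).map T := update_self _ _ _
    have hVj : ∀ j ≠ m i, replaceBySupMap T i (m i) V j = V j := fun j hj => update_of_ne hj _ _
    refine ⟨V (m i), ⟨?_, ?_, fun heq => hVA ((h.mem_Hess_iff hVX).2 ?_)⟩, ?_⟩
    · rw [hVj _ (by omega)]; exact hVX.1.apply_lt_apply (by omega) (by omega)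
    · rw [hVj _ (by omega)]; exact hVX.1.apply_lt_apply (by omega) h.apply_lt
    · rw [heq, hVm]; exact le_sup_right
    · simp only [replaceBySupMap, update_idem, update_eq_self]
  · rintro ⟨W, ⟨hW₁, hW₂, hWne⟩, rfl⟩
    refine ⟨h.update_mem_Hess_sdiff hy hW₁ hW₂ hWne, ?_⟩
    rw [replaceBySupMap, update_idem, update_of_ne (by omega), update_of_ne (by omega),
      h.sup_map_eq hy, update_eq_self]

lemma ncard_Hess_sdiff [Finite F] (h : ModularIndex n m i) :
    (Hess F n (update m i (m i + 1)) T \ Hess F n m T).ncard =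
      (Hess F n m T \ Hess F n (update m i (m i - 1)) T).ncard * Nat.card F := by
  have := h.one_le; have := h.lt_apply; have := h.apply_lt
  refine ncard_eq_ncard_mul_of_ncard_fiber ((Hess_finite _ _ _).sdiff) ((Hess_finite _ _ _).sdiff)
    h.mapsTo_replaceBySupMap fun y hy => ?_
  rw [h.setOf_replaceBySupMap_eq hy, Set.ncard_image_of_injective _ (update_injective y _)]
  have hy := hy.1.1
  exact ncard_setOf_lt_lt_ne (hy.apply_lt_apply (by omega) (by omega))
    (hy.apply_lt_apply (by omega) (by omega))
    (by rw [hy.finrank_eq (by omega), hy.finrank_eq (by omega)]; omega)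

theorem ncard_Hess_modular [Finite F] (h : ModularIndex n m i) :
    (1 + Nat.card F) * (Hess F n m T).ncard =
      Nat.card F * (Hess F n (update m i (m i - 1)) T).ncard +
        (Hess F n (update m i (m i + 1)) T).ncard := by
  have hAX := Hess_subset_update_succ (F := F) (n := n) (T := T) m i
  have hX := Hess_finite n (update m i (m i + 1)) T
  rw [← Set.ncard_sdiff_add_ncard_of_subset hAX hX,
    ← Set.ncard_sdiff_add_ncard_of_subset (Hess_update_pred_subset m i) (hX.subset hAX),
    h.ncard_Hess_sdiff]
  ring

end ModularIndex

theorem stmt6_general (F : Type) [Field F] [Fintype F] (n : ℕ)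
    (m₀ m₁ m₂ : ℕ → ℕ) (h₀ : IsHess n m₀) (h₁ : IsHess n m₁)
    (i : ℕ) (hi1 : 1 ≤ i) (hin : i ≤ n - 1)
    (ha : m₁ (i - 1) < m₁ i) (hb : m₁ i < m₁ (i + 1))
    (hc : m₁ (m₁ i) = m₁ (m₁ i + 1))
    (hoff : ∀ j, j ≠ i → m₀ j = m₁ j ∧ m₂ j = m₁ j)
    (h0i : m₀ i = m₁ i - 1) (h2i : m₂ i = m₁ i + 1)
    (T : Module.End F (Fin n → F)) :
    (1 + Fintype.card F) * (Hess F n m₁ T).ncard =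
      Fintype.card F * (Hess F n m₀ T).ncard + (Hess F n m₂ T).ncard := by
  have hm₀ : m₀ = update m₁ i (m₁ i - 1) := funext fun j => by
    rcases eq_or_ne j i with rfl | hj
    · rw [update_self, h0i]
    · rw [update_of_ne hj, (hoff j hj).1]
  have hm₂ : m₂ = update m₁ i (m₁ i + 1) := funext fun j => by
    rcases eq_or_ne j i with rfl | hj
    · rw [update_self, h2i]
    · rw [update_of_ne hj, (hoff j hj).2]
  subst hm₀ hm₂
  rw [← Nat.card_eq_fintype_card]
  exact (ModularIndex.of_isHess h₀ h₁ hi1 hin ha hb hc).ncard_Hess_modular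

/-- The modular law, condition (1): if `m₀, m₁, m₂` are Hessenberg functions related by
condition (1) at index `i`, then `(1+q)|H(m₁,T)| = q|H(m₀,T)| + |H(m₂,T)|`.
(We use the convention `m₁ 0 = 0`.) -/
theorem stmt6 (F : Type) [Field F] [Fintype F] (n : ℕ)
    (m₀ m₁ m₂ : ℕ → ℕ) (h₀ : IsHess n m₀) (h₁ : IsHess n m₁) (h₂ : IsHess n m₂)
    (hconv : m₁ 0 = 0)
    (i : ℕ) (hi1 : 1 ≤ i) (hin : i ≤ n - 1)
    (ha : m₁ (i - 1) < m₁ i) (hb : m₁ i < m₁ (i + 1))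
    (hc : m₁ (m₁ i) = m₁ (m₁ i + 1))
    (hoff : ∀ j, j ≠ i → m₀ j = m₁ j ∧ m₂ j = m₁ j)
    (h0i : m₀ i = m₁ i - 1) (h2i : m₂ i = m₁ i + 1)
    (T : Module.End F (Fin n → F)) :
    (1 + Fintype.card F) * (Hess F n m₁ T).ncard =
      Fintype.card F * (Hess F n m₀ T).ncard + (Hess F n m₂ T).ncard :=
  stmt6_general F n m₀ m₁ m₂ h₀ h₁ i hi1 hin ha hb hc hoff h0i h2i T
end

section
/- Let λ=(λ_1,…,λ_ℓ) be a partition of n with partial sums α_i = λ_1+⋯+λ_i, and let k_λ be the Hessenberg function whose value is α_i on each j with α_{i-1} < j ≤ α_i. Then for any linear operator T on F_q^n, the map sending a complete flag in H(k_λ,T) to the subflag (V_{α_1}, V_{α_2}, …, V_{α_ℓ}) is a surjection onto the set of λ-flags of T-invariant subspaces, and every fiber has cardinality [λ]_q! := ∏_{i=1}^ℓ [λ_i]_q!. -/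
/-- Partial sums `α t = λ 1 + ⋯ + λ t` of a sequence `λ : Fin ℓ → ℕ`. -/
def psum (ℓ : ℕ) (lam : Fin ℓ → ℕ) (t : ℕ) : ℕ :=
  ∑ j ∈ Finset.range t, if h : j < ℓ then lam ⟨j, h⟩ else 0

/-- The complete-type Hessenberg function `k_λ`, taking the value `α i` on each `j`
with `α (i-1) < j ≤ α i`. -/
noncomputable def kLam (ℓ : ℕ) (lam : Fin ℓ → ℕ) : ℕ → ℕ :=
  fun j => psum ℓ lam (sInf {t | j ≤ psum ℓ lam t})

/-- A `λ`-flag of `T`-invariant subspaces: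
`0 = W 0 ⊆ W 1 ⊆ ⋯ ⊆ W ℓ = F^n` with `dim (W i) = λ 1 + ⋯ + λ i`
(equivalently `dim (W i / W (i-1)) = λ i`) and `T (W i) ⊆ W i`. -/
def IsInvLamFlag (F : Type) [Field F] (n : ℕ) (ℓ : ℕ) (lam : Fin ℓ → ℕ)
    (T : Module.End F (Fin n → F)) (W : Fin (ℓ + 1) → Submodule F (Fin n → F)) : Prop :=
  W 0 = ⊥ ∧ W (Fin.last ℓ) = ⊤ ∧ Monotone W ∧
  (∀ i : Fin (ℓ + 1), Module.finrank F ↥(W i) = psum ℓ lam i) ∧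
  ∀ i, (W i).map T ≤ W i

/-!
If `V ∈ H(k_λ, T)`, then `k_λ (α i) = α i` makes every `V (α i)` invariant under `T`.
Conversely, fix a `T`-invariant `λ`-flag `W`. A complete flag `V` passes through every `W i`
iff `V j ≤ W i` whenever `j ≤ α i`, i.e. iff `V j ≤ U j`, where `U j` is the smallest `W i` with
`j ≤ α i`; it has dimension `k_λ j`, and `V (k_λ j) = U j`. The Hessenberg condition
`T (V j) ≤ V (k_λ j)` is then automatic, because `U j` is `T`-invariant. So the fibre over `W`
is the set of complete flags with `V j ≤ U j`. These are counted one step at a time: given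
`V j`, the possible `V (j + 1)` are the lines of `U (j + 1) / V j`, and there are
`[k_λ (j + 1) - j]_q` of them. Over a block `α (i - 1) ≤ j < α i`, these factors multiply to
`[λ i]_q!`.
-/

open Module Submodule Finset

theorem Nat.card_sigma_of_card_eq {α : Type*} {β : α → Type*} [∀ a, Finite (β a)] {k : ℕ}
    (h : ∀ a, Nat.card (β a) = k) : Nat.card (Σ a, β a) = Nat.card α * k := by
  rw [Nat.card_congr ((Equiv.sigmaCongrRight fun a => Finite.equivFinOfCardEq (h a)).trans
    (Equiv.sigmaEquivProd _ _)), Nat.card_prod, Nat.card_fin]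

section Covers

variable {F E : Type*} [Field F] [AddCommGroup E] [Module F E] [Finite E]

instance Submodule.finite_of_finite : Finite (Submodule F E) :=
  Finite.of_injective _ SetLike.coe_injective

theorem natCard_mem_notMem_add {A B : Submodule F E} (hAB : A ≤ B) :
    Nat.card {x // x ∈ B ∧ x ∉ A} + Nat.card F ^ finrank F A = Nat.card F ^ finrank F B := by
  rw [← natCard_eq_pow_finrank, ← natCard_eq_pow_finrank]
  have e : {x // x ∈ B ∧ x ∉ A} ≃ ((B : Set E) \ A : Set E) :=
    Equiv.subtypeEquivRight fun _ => Iff.rfl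
  rw [Nat.card_congr e, ← SetLike.coe_sort_coe A, ← SetLike.coe_sort_coe B]
  simp only [Nat.card_coe_set_eq]
  exact Set.ncard_sdiff_add_ncard_of_subset (by exact_mod_cast hAB)

theorem qInt_mul_sub_one_add_one {q : ℕ} (hq : 1 ≤ q) (m : ℕ) :
    qInt q m * (q - 1) + 1 = q ^ m := by
  obtain ⟨r, rfl⟩ := Nat.exists_eq_add_of_le' hq
  simpa [qInt] using geom_sum_mul_add r m

theorem natCard_covers [Finite F] {A B : Submodule F E} (hAB : A ≤ B) :
    Nat.card {X : Submodule F E // A ≤ X ∧ X ≤ B ∧ finrank F X = finrank F A + 1} =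
      qInt (Nat.card F) (finrank F B - finrank F A) := by
  have hq : 1 < Nat.card F := Finite.one_lt_card
  let D := {x // x ∈ B ∧ x ∉ A}
  let C := {X : Submodule F E // A ≤ X ∧ X ≤ B ∧ finrank F X = finrank F A + 1}
  -- `x ↦ A ⊔ F x` maps `B \ A` onto the covers `C`, with fibres `X \ A` of size `q^(a+1) - q^a`.
  let φ : D → C := fun x => ⟨A ⊔ span F {x.1}, le_sup_left,
    sup_le hAB ((span_singleton_le_iff_mem _ _).2 x.2.1), finrank_sup_span_singleton x.2.2⟩
  have hfiber (X : C) : {x : D // φ x = X} ≃ {x // x ∈ X.1 ∧ x ∉ A} :=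
    { toFun x := ⟨x.1.1, (congrArg Subtype.val x.2).le (mem_sup_right (mem_span_singleton_self _)),
        x.1.2.2⟩
      invFun x := ⟨⟨x.1, X.2.2.1 x.2.1, x.2.2⟩, Subtype.ext <| eq_of_le_of_finrank_eq
        (sup_le X.2.1 ((span_singleton_le_iff_mem _ _).2 x.2.1))
        (by rw [finrank_sup_span_singleton x.2.2, X.2.2.2])⟩
      left_inv _ := rfl
      right_inv _ := rfl }
  have hcount :
      Nat.card D = Nat.card C * (Nat.card F ^ (finrank F A + 1) - Nat.card F ^ finrank F A) := by
    rw [← Nat.card_congr (Equiv.sigmaFiberEquiv φ)]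
    refine Nat.card_sigma_of_card_eq fun X => ?_
    have := natCard_mem_notMem_add X.2.1
    rw [X.2.2.2] at this
    rw [Nat.card_congr (hfiber X)]
    omega
  obtain ⟨d, hd⟩ := Nat.exists_eq_add_of_le (finrank_mono hAB)
  have htotal := natCard_mem_notMem_add hAB
  rw [hcount, hd, pow_succ, ← Nat.mul_sub_one, pow_add,
    ← qInt_mul_sub_one_add_one hq.le d] at htotal
  rw [hd, Nat.add_sub_cancel_left]
  have hpos : 0 < Nat.card F ^ finrank F A * (Nat.card F - 1) :=
    Nat.mul_pos (by positivity) (by omega)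
  rw [mul_add, mul_one, Nat.add_right_cancel_iff] at htotal
  exact Nat.eq_of_mul_eq_mul_right hpos (htotal.trans (by ring))

end Covers

section BoundedFlags

variable {F E : Type*} [Field F] [AddCommGroup E] [Module F E]

/-- Flags `V 0 ≤ ⋯ ≤ V m` with `dim V j = j` and `V j ≤ U j`, continued constantly after `m`. -/
def flagsBelow (U : ℕ → Submodule F E) (m : ℕ) : Set (ℕ → Submodule F E) :=
  {V | (∀ j, V j ≤ V (j + 1)) ∧ (∀ j, finrank F (V j) = min j m) ∧ ∀ j ≤ m, V j ≤ U j}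

variable {U : ℕ → Submodule F E} {m : ℕ} {V : ℕ → Submodule F E}

theorem eq_of_mem_flagsBelow [FiniteDimensional F E] (hV : V ∈ flagsBelow U m) {j : ℕ}
    (hj : m ≤ j) : V j = V m :=
  (eq_of_le_of_finrank_eq (monotone_nat_of_le_succ hV.1 hj) (by rw [hV.2.1, hV.2.1]; omega)).symm

theorem flagsBelow_zero [FiniteDimensional F E] : flagsBelow U 0 = {⊥} := by
  ext V
  refine ⟨fun hV => funext fun j => finrank_eq_zero.1 (by simpa using hV.2.1 j), ?_⟩
  rintro rfl
  exact ⟨fun _ => le_rfl, fun _ => by simp, fun _ _ => bot_le⟩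

theorem min_mem_flagsBelow (hV : V ∈ flagsBelow U (m + 1)) :
    (fun j => V (min j m)) ∈ flagsBelow U m := by
  refine ⟨fun j => monotone_nat_of_le_succ hV.1 (by omega), fun j => ?_, fun j hj => ?_⟩
  · rw [hV.2.1]; omega
  · simpa [min_eq_left hj] using hV.2.2 j (by omega)

theorem ite_mem_flagsBelow (hV : V ∈ flagsBelow U m) {X : Submodule F E} (hVX : V m ≤ X)
    (hXU : X ≤ U (m + 1)) (hX : finrank F X = finrank F (V m) + 1) :
    (fun j => if j ≤ m then V j else X) ∈ flagsBelow U (m + 1) := by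
  have hXm : finrank F X = m + 1 := by rw [hX, hV.2.1, min_self]
  refine ⟨fun j => ?_, fun j => ?_, fun j hj => ?_⟩ <;> dsimp only
  · by_cases h : j + 1 ≤ m
    · simpa [h, show j ≤ m by omega] using hV.1 j
    by_cases h' : j = m
    · simpa [h', h] using hVX
    · simp [h, show ¬j ≤ m by omega]
  · by_cases h : j ≤ m
    · simp only [apply_ite (fun S : Submodule F E => finrank F S), if_pos h, hV.2.1]; omega
    · simp only [apply_ite (fun S : Submodule F E => finrank F S), if_neg h, hXm]; omega
  · by_cases h : j ≤ m
    · simpa [h] using hV.2.2 j h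
    · simpa [h, show j = m + 1 by omega] using hXU

def flagsBelowSuccEquiv [FiniteDimensional F E] (U : ℕ → Submodule F E) (m : ℕ) :
    flagsBelow U (m + 1) ≃ Σ V : flagsBelow U m,
      {X : Submodule F E // V.1 m ≤ X ∧ X ≤ U (m + 1) ∧ finrank F X = finrank F (V.1 m) + 1} where
  toFun V := ⟨⟨_, min_mem_flagsBelow V.2⟩, ⟨V.1 (m + 1), by
    simpa [V.2.2.1] using And.intro (V.2.1 m) (V.2.2.2 (m + 1) le_rfl)⟩⟩
  invFun V := ⟨_, ite_mem_flagsBelow V.1.2 V.2.2.1 V.2.2.2.1 V.2.2.2.2⟩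
  left_inv V := by
    refine Subtype.ext (funext fun j => ?_)
    dsimp only
    split_ifs with h
    · rw [min_eq_left h]
    · exact (eq_of_mem_flagsBelow V.2 (by omega)).symm
  right_inv V := by
    refine Sigma.subtype_ext (Subtype.ext (funext fun j => ?_)) (if_neg (by omega))
    dsimp only
    rw [if_pos (min_le_right j m)]
    rcases le_total j m with h | h
    · rw [min_eq_left h]
    · rw [min_eq_right h, eq_of_mem_flagsBelow V.1.2 h]

theorem natCard_flagsBelow [Finite F] [FiniteDimensional F E] (hU : ∀ j < m, U j ≤ U (j + 1)) :
    Nat.card (flagsBelow U m) =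
      ∏ j ∈ range m, qInt (Nat.card F) (finrank F (U (j + 1)) - j) := by
  have := Module.finite_of_finite F (M := E)
  induction m with
  | zero => simp [flagsBelow_zero]
  | succ m ih =>
    rw [Nat.card_congr (flagsBelowSuccEquiv U m), prod_range_succ,
      ← ih fun j hj => hU j (by omega)]
    refine Nat.card_sigma_of_card_eq fun V => ?_
    rw [natCard_covers ((V.2.2.2 m le_rfl).trans (hU m (by omega))), V.2.2.1, min_self]

end BoundedFlags

section PartialSums

variable {ℓ : ℕ} {lam : Fin ℓ → ℕ}

theorem psum_zero : psum ℓ lam 0 = 0 := sum_range_zero _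

theorem psum_succ (t : ℕ) :
    psum ℓ lam (t + 1) = psum ℓ lam t + if h : t < ℓ then lam ⟨t, h⟩ else 0 :=
  sum_range_succ _ _

theorem psum_mono : Monotone (psum ℓ lam) := fun _ _ h =>
  sum_le_sum_of_subset (range_subset_range.2 h)

theorem psum_le_psum_self (i : Fin (ℓ + 1)) : psum ℓ lam i ≤ psum ℓ lam ℓ :=
  psum_mono i.is_le

theorem psum_self : psum ℓ lam ℓ = ∑ i, lam i := by
  rw [psum, ← Fin.sum_univ_eq_sum_range]
  simp

theorem le_kLam {j L : ℕ} (h : j ≤ psum ℓ lam L) : j ≤ kLam ℓ lam j :=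
  Nat.sInf_mem (s := {t | j ≤ psum ℓ lam t}) ⟨L, h⟩

theorem kLam_le_psum {j i : ℕ} (h : j ≤ psum ℓ lam i) : kLam ℓ lam j ≤ psum ℓ lam i :=
  psum_mono (Nat.sInf_le h)

theorem kLam_psum (i : ℕ) : kLam ℓ lam (psum ℓ lam i) = psum ℓ lam i :=
  (kLam_le_psum le_rfl).antisymm (le_kLam le_rfl)

theorem kLam_eq_psum_succ {j t : ℕ} (h₁ : psum ℓ lam t < j) (h₂ : j ≤ psum ℓ lam (t + 1)) :
    kLam ℓ lam j = psum ℓ lam (t + 1) := by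
  have hup : ∀ a b, a ≤ b → a ∈ {t | j ≤ psum ℓ lam t} → b ∈ {t | j ≤ psum ℓ lam t} :=
    fun _ _ hab ha => ha.trans (psum_mono hab)
  exact congrArg (psum ℓ lam) ((Nat.sInf_upward_closed_eq_succ_iff hup t).2 ⟨h₂, h₁.not_ge⟩)

theorem prod_qInt_kLam (q L : ℕ) :
    ∏ j ∈ range (psum ℓ lam L), qInt q (kLam ℓ lam (j + 1) - j) =
      ∏ i ∈ range L, qFact q (if h : i < ℓ then lam ⟨i, h⟩ else 0) := by
  induction L with
  | zero => simp [psum_zero]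
  | succ L ih =>
    have hsucc := psum_succ (lam := lam) L
    rw [hsucc, prod_range_add, ih, prod_range_succ]
    generalize (if h : L < ℓ then lam ⟨L, h⟩ else 0) = g at hsucc ⊢
    rw [qFact, ← prod_range_reflect (fun j => qInt q (j + 1))]
    refine congrArg _ (prod_congr rfl fun x hx => ?_)
    rw [mem_range] at hx
    rw [kLam_eq_psum_succ (t := L) (by omega) (by omega), hsucc]
    congr 1
    omega

theorem prod_qInt_kLam_self (q : ℕ) :
    ∏ j ∈ range (psum ℓ lam ℓ), qInt q (kLam ℓ lam (j + 1) - j) = ∏ i, qFact q (lam i) := by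
  rw [prod_qInt_kLam, ← Fin.prod_univ_eq_prod_range]
  simp

end PartialSums

section Ceiling

variable {F E : Type*} [Field F] [AddCommGroup E] [Module F E] {ℓ : ℕ} {lam : Fin ℓ → ℕ}

def lamCeiling (ℓ : ℕ) (lam : Fin ℓ → ℕ) (W : Fin (ℓ + 1) → Submodule F E) (j : ℕ) :
    Submodule F E :=
  ⨅ (i : Fin (ℓ + 1)) (_ : j ≤ psum ℓ lam i), W i

theorem lamCeiling_mono (W : Fin (ℓ + 1) → Submodule F E) : Monotone (lamCeiling ℓ lam W) :=
  fun _ _ h => biInf_mono fun _ hi => h.trans hi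

theorem lamCeiling_le {W : Fin (ℓ + 1) → Submodule F E} {j : ℕ} {i : Fin (ℓ + 1)}
    (h : j ≤ psum ℓ lam i) : lamCeiling ℓ lam W j ≤ W i :=
  iInf₂_le (f := fun (i : Fin (ℓ + 1)) (_ : j ≤ psum ℓ lam i) => W i) i h

theorem le_lamCeiling {W : Fin (ℓ + 1) → Submodule F E} {j : ℕ} {X : Submodule F E}
    (h : ∀ i : Fin (ℓ + 1), j ≤ psum ℓ lam i → X ≤ W i) : X ≤ lamCeiling ℓ lam W j :=
  le_iInf₂ h

theorem lamCeiling_eq {W : Fin (ℓ + 1) → Submodule F E} (hW : Monotone W) {j : ℕ}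
    (hj : j ≤ psum ℓ lam ℓ) :
    lamCeiling ℓ lam W j = W ⟨sInf {t | j ≤ psum ℓ lam t}, Nat.lt_succ_of_le (Nat.sInf_le hj)⟩ :=
  le_antisymm (lamCeiling_le (le_kLam hj))
    (le_lamCeiling fun _ hi => hW (Fin.mk_le_of_le_val (Nat.sInf_le hi)))

theorem finrank_lamCeiling {W : Fin (ℓ + 1) → Submodule F E} (hW : Monotone W)
    (hrk : ∀ i, finrank F (W i) = psum ℓ lam i) {j : ℕ} (hj : j ≤ psum ℓ lam ℓ) :
    finrank F (lamCeiling ℓ lam W j) = kLam ℓ lam j := by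
  rw [lamCeiling_eq hW hj, hrk]
  rfl

end Ceiling

section CompleteFlags

variable {F : Type} [Field F] {n ℓ : ℕ} {lam : Fin ℓ → ℕ} {T : Module.End F (Fin n → F)}
  {V : ℕ → Submodule F (Fin n → F)}

theorem isFlag_iff :
    IsFlag F n V ↔ (∀ j, V j ≤ V (j + 1)) ∧ ∀ j, finrank F (V j) = min j n := by
  refine ⟨fun ⟨_, hn, hstep, hrk⟩ => ⟨hstep, fun j => ?_⟩, fun ⟨hstep, hrk⟩ => ⟨?_, ?_, hstep, ?_⟩⟩
  · rcases le_total j n with h | h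
    · rw [hrk j h, min_eq_left h]
    · have hVj : V j = ⊤ := top_unique (hn ▸ monotone_nat_of_le_succ hstep h)
      rw [hVj, finrank_top, finrank_fin_fun, min_eq_right h]
  · exact finrank_eq_zero.1 (by simp [hrk])
  · exact eq_top_of_finrank_eq (by simp [hrk])
  · exact fun j hj => by rw [hrk, min_eq_left hj]

theorem isInvLamFlag_of_mem_hess (hn : psum ℓ lam ℓ = n) (hV : V ∈ Hess F n (kLam ℓ lam) T) :
    IsInvLamFlag F n ℓ lam T (fun i => V (psum ℓ lam i)) := by
  obtain ⟨⟨hV0, hVn, hstep, hrk⟩, hVT⟩ := hV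
  have hle (i : Fin (ℓ + 1)) : psum ℓ lam i ≤ n := hn ▸ psum_le_psum_self i
  refine ⟨by simpa [psum_zero], by simpa [hn], fun i j hij => monotone_nat_of_le_succ hstep
    (psum_mono hij), fun i => hrk _ (hle i), fun i => ?_⟩
  rcases Nat.eq_zero_or_pos (psum ℓ lam i) with h | h
  · simp [h, hV0]
  · simpa [kLam_psum] using hVT _ h (hle i)

theorem fiber_eq_flagsBelow (hn : psum ℓ lam ℓ = n) {W : Fin (ℓ + 1) → Submodule F (Fin n → F)}
    (hW : IsInvLamFlag F n ℓ lam T W) :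
    {V | V ∈ Hess F n (kLam ℓ lam) T ∧ ∀ i : Fin (ℓ + 1), V (psum ℓ lam i) = W i} =
      flagsBelow (lamCeiling ℓ lam W) n := by
  obtain ⟨-, -, hWmono, hWrk, hWT⟩ := hW
  ext V
  constructor
  · rintro ⟨⟨hV, -⟩, hVW⟩
    obtain ⟨hstep, hrk⟩ := isFlag_iff.1 hV
    refine ⟨hstep, hrk, fun j _ => le_lamCeiling fun i hi => ?_⟩
    rw [← hVW i]
    exact monotone_nat_of_le_succ hstep hi
  · rintro ⟨hstep, hrk, hle⟩
    have hVW (i : Fin (ℓ + 1)) : V (psum ℓ lam i) = W i := by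
      have hi : psum ℓ lam i ≤ n := hn ▸ psum_le_psum_self i
      refine eq_of_le_of_finrank_eq ((hle _ hi).trans (lamCeiling_le le_rfl)) ?_
      rw [hrk, hWrk, min_eq_left hi]
    refine ⟨⟨isFlag_iff.2 ⟨hstep, hrk⟩, fun j _ hj => ?_⟩, hVW⟩
    have hceil := lamCeiling_eq hWmono (hn ▸ hj)
    calc map T (V j) ≤ map T (lamCeiling ℓ lam W j) := map_mono (hle j hj)
      _ ≤ lamCeiling ℓ lam W j := by rw [hceil]; exact hWT _
      _ = V (kLam ℓ lam j) := hceil.trans (hVW _).symm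

end CompleteFlags

theorem stmt9_general (F : Type) [Field F] [Fintype F] (n : ℕ)
    (ℓ : ℕ) (lam : Fin ℓ → ℕ)
    (hsum : ∑ i, lam i = n)
    (T : Module.End F (Fin n → F)) :
    (∀ V ∈ Hess F n (kLam ℓ lam) T,
      IsInvLamFlag F n ℓ lam T (fun i => V (psum ℓ lam i))) ∧
    (∀ W : Fin (ℓ + 1) → Submodule F (Fin n → F), IsInvLamFlag F n ℓ lam T W →
      {V | V ∈ Hess F n (kLam ℓ lam) T ∧
          ∀ i : Fin (ℓ + 1), V (psum ℓ lam i) = W i}.ncard =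
        ∏ i, qFact (Fintype.card F) (lam i)) := by
  have hn : psum ℓ lam ℓ = n := psum_self.trans hsum
  refine ⟨fun V hV => isInvLamFlag_of_mem_hess hn hV, fun W hW => ?_⟩
  rw [fiber_eq_flagsBelow hn hW, ← Nat.card_coe_set_eq,
    natCard_flagsBelow fun j _ => lamCeiling_mono W j.le_succ, Fintype.card_eq_nat_card,
    ← prod_qInt_kLam_self, hn]
  refine prod_congr rfl fun j hj => ?_
  rw [finrank_lamCeiling hW.2.2.1 hW.2.2.2.1 (by rw [hn]; exact mem_range.1 hj)]

/-- For `m = k_λ`, the map sending a flag in `H(k_λ, T)` to its subflag at the partial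
sums `α i` lands in the set of `λ`-flags of `T`-invariant subspaces, is surjective onto
it, and every fiber has exactly `[λ]_q! = ∏ i [λ i]_q!` elements. -/
theorem stmt9 (F : Type) [Field F] [Fintype F] (n : ℕ)
    (ℓ : ℕ) (lam : Fin ℓ → ℕ) (hpos : ∀ i, 0 < lam i) (hanti : Antitone lam)
    (hsum : ∑ i, lam i = n)
    (T : Module.End F (Fin n → F)) :
    (∀ V ∈ Hess F n (kLam ℓ lam) T,
      IsInvLamFlag F n ℓ lam T (fun i => V (psum ℓ lam i))) ∧
    (∀ W : Fin (ℓ + 1) → Submodule F (Fin n → F), IsInvLamFlag F n ℓ lam T W →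
      {V | V ∈ Hess F n (kLam ℓ lam) T ∧
          ∀ i : Fin (ℓ + 1), V (psum ℓ lam i) = W i}.ncard =
        ∏ i, qFact (Fintype.card F) (lam i)) :=
  stmt9_general F n ℓ lam hsum T
end

section
/- For each entry x of a tabloid θ, define its value as the number of entries smaller than x that appear either in the same column above x, or in the column immediately to the right of x and below x; let val(θ) be the sum of values of all entries. Define w(θ) as the number of pairs of entries i>k such that (a) i appears below k in the same column or in a column strictly to the left of the column of k, and (b) if a box immediately to the right of k is filled with entry j, then i≤j. Then w(θ) = val(θ) for every tabloid θ. -/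
/-
The pairs `(p, y)` with `θ y < θ p` and `y` either above `p` in its column or in a column strictly
to its right are the common source of both statistics: `w` and `val` each pick exactly one such
pair `(p, y)` for every pair `(p, r)` where some such `y` lies in row `r`. Since rows increase, `w`
takes `y` to be the last cell of row `r` with entry below `θ p`, and `val` the cell of row `r` in
column `c` (if `r` is above `p`) or `c + 1` (if `r` is below `p`), `c` being the column of `p`;
the row of `p` itself never contributes.
-/

open scoped Classical

/-- Butler's value statistic `val(θ)` of a tabloid: for each pair of positions
`(p, y)` in the diagram, count it when the entry at `y` is smaller than the entry at
`p` and `y` lies either in the same column as `p` and strictly above it, or in the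
column immediately to the right of `p` and strictly below it.  (English notation:
"above" means smaller row index.)  Positions are pairs `⟨r, c⟩` with `c < sh r`. -/
noncomputable def valStat (L : ℕ) (sh : Fin L → ℕ) (θ : (r : Fin L) → Fin (sh r) → ℕ) : ℕ :=
  (Finset.univ.filter fun pq : (Σ r : Fin L, Fin (sh r)) × (Σ r : Fin L, Fin (sh r)) =>
    θ pq.2.1 pq.2.2 < θ pq.1.1 pq.1.2 ∧
      (((pq.2.2 : ℕ) = (pq.1.2 : ℕ) ∧ (pq.2.1 : ℕ) < (pq.1.1 : ℕ)) ∨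
        ((pq.2.2 : ℕ) = (pq.1.2 : ℕ) + 1 ∧ (pq.1.1 : ℕ) < (pq.2.1 : ℕ)))).card

/-- The statistic `w(θ)`: the number of pairs of positions `(pᵢ, pₖ)` whose entries
satisfy `i > k`, such that (a) `pᵢ` is below `pₖ` in the same column or in a column
strictly to the left of that of `pₖ`, and (b) if the box immediately to the right of
`pₖ` exists and holds entry `j`, then `i ≤ j`. -/
noncomputable def wStat (L : ℕ) (sh : Fin L → ℕ) (θ : (r : Fin L) → Fin (sh r) → ℕ) : ℕ :=
  (Finset.univ.filter fun pq : (Σ r : Fin L, Fin (sh r)) × (Σ r : Fin L, Fin (sh r)) =>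
    θ pq.2.1 pq.2.2 < θ pq.1.1 pq.1.2 ∧
      (((pq.1.2 : ℕ) = (pq.2.2 : ℕ) ∧ (pq.2.1 : ℕ) < (pq.1.1 : ℕ)) ∨
        (pq.1.2 : ℕ) < (pq.2.2 : ℕ)) ∧
      (∀ h : (pq.2.2 : ℕ) + 1 < sh pq.2.1,
        θ pq.1.1 pq.1.2 ≤ θ pq.2.1 ⟨(pq.2.2 : ℕ) + 1, h⟩)).card

open Finset

theorem Finset.card_eq_card_image_of_injOn_of_subset {α β : Type*} [DecidableEq β]
    {F A : Finset α} {g : α → β} (hFA : F ⊆ A) (hinj : Set.InjOn g F)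
    (hsurj : ∀ x ∈ A, ∃ y ∈ F, g y = g x) : #F = #(A.image g) := by
  rw [← card_image_of_injOn hinj]
  refine congrArg card ((image_subset_image hFA).antisymm fun b hb => ?_)
  obtain ⟨x, hx, rfl⟩ := mem_image.1 hb
  obtain ⟨y, hy, hxy⟩ := hsurj x hx
  exact mem_image.2 ⟨y, hy, hxy⟩

section LastBelow

variable {α : Type*} [LinearOrder α] {n : ℕ} {f : Fin n → α} {i : α} {c d : Fin n}

def IsLastBelow (f : Fin n → α) (i : α) (c : Fin n) : Prop :=
  f c < i ∧ ∀ h : (c : ℕ) + 1 < n, i ≤ f ⟨c + 1, h⟩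

theorem IsLastBelow.le_of_lt (hf : Monotone f) (hc : IsLastBelow f i c) (hd : f d < i) :
    d ≤ c := by
  by_contra! hcd
  have hnext : (c : ℕ) + 1 < n := by have := d.isLt; omega
  exact (hc.2 hnext).not_gt ((hf (show (c : ℕ) + 1 ≤ d from hcd)).trans_lt hd)

theorem IsLastBelow.unique (hf : Monotone f) (hc : IsLastBelow f i c)
    (hd : IsLastBelow f i d) : c = d :=
  le_antisymm (hd.le_of_lt hf hc.1) (hc.le_of_lt hf hd.1)

theorem exists_isLastBelow_ge (hd : f d < i) : ∃ c, d ≤ c ∧ IsLastBelow f i c := by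
  set S := univ.filter fun e => f e < i
  have hS : S.Nonempty := ⟨d, by simpa [S] using hd⟩
  have hmax : f (S.max' hS) < i := by simpa [S] using S.max'_mem hS
  refine ⟨S.max' hS, S.le_max' d (by simpa [S] using hd), hmax, fun h => ?_⟩
  by_contra! hnext
  have := S.le_max' ⟨_, h⟩ (by simpa [S] using hnext)
  simp [Fin.le_def] at this

end LastBelow

variable {L : ℕ} {sh : Fin L → ℕ}

noncomputable def descentPairs (L : ℕ) (sh : Fin L → ℕ) (θ : (r : Fin L) → Fin (sh r) → ℕ) :
    Finset ((Σ r : Fin L, Fin (sh r)) × (Σ r : Fin L, Fin (sh r))) :=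
  univ.filter fun pq => θ pq.2.1 pq.2.2 < θ pq.1.1 pq.1.2 ∧
    (((pq.1.2 : ℕ) = (pq.2.2 : ℕ) ∧ (pq.2.1 : ℕ) < (pq.1.1 : ℕ)) ∨ (pq.1.2 : ℕ) < (pq.2.2 : ℕ))

theorem wStat_eq_card_image_descentPairs (θ : (r : Fin L) → Fin (sh r) → ℕ)
    (hrows : ∀ r, Monotone (θ r)) :
    wStat L sh θ = #((descentPairs L sh θ).image fun pq => (pq.1, pq.2.1)) := by
  refine card_eq_card_image_of_injOn_of_subset ?_ ?_ ?_
  · intro x hx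
    simp only [descentPairs, mem_filter, mem_univ, true_and] at hx ⊢
    exact ⟨hx.1, hx.2.1⟩
  · rintro ⟨p, r, c⟩ hx ⟨p', r', c'⟩ hx' hpr
    simp only [Prod.mk.injEq] at hpr
    obtain ⟨rfl, rfl⟩ := hpr
    simp only [mem_coe, mem_filter, mem_univ, true_and] at hx hx'
    rw [IsLastBelow.unique (hrows r) ⟨hx.1, hx.2.2⟩ ⟨hx'.1, hx'.2.2⟩]
  · rintro ⟨p, r, c⟩ hx
    simp only [descentPairs, mem_filter, mem_univ, true_and] at hx
    obtain ⟨c', hcc', hlast⟩ := exists_isLastBelow_ge hx.1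
    refine ⟨(p, ⟨r, c'⟩), ?_, rfl⟩
    simp only [mem_filter, mem_univ, true_and]
    rw [Fin.le_def] at hcc'
    exact ⟨hlast.1, by omega, hlast.2⟩

theorem valStat_eq_card_image_descentPairs (θ : (r : Fin L) → Fin (sh r) → ℕ)
    (hrows : ∀ r, Monotone (θ r)) :
    valStat L sh θ = #((descentPairs L sh θ).image fun pq => (pq.1, pq.2.1)) := by
  refine card_eq_card_image_of_injOn_of_subset ?_ ?_ ?_
  · intro x hx
    simp only [descentPairs, mem_filter, mem_univ, true_and] at hx ⊢
    exact ⟨hx.1, by omega⟩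
  · rintro ⟨p, r, c⟩ hx ⟨p', r', c'⟩ hx' hpr
    simp only [Prod.mk.injEq] at hpr
    obtain ⟨rfl, rfl⟩ := hpr
    simp only [mem_coe, mem_filter, mem_univ, true_and] at hx hx'
    have : (c : ℕ) = c' := by omega
    rw [Fin.ext this]
  · rintro ⟨⟨pr, pc⟩, r, c⟩ hx
    simp only [descentPairs, mem_filter, mem_univ, true_and] at hx
    obtain ⟨hlt, hcol⟩ := hx
    rcases lt_trichotomy r pr with hr | rfl | hr
    · refine ⟨(⟨pr, pc⟩, ⟨r, ⟨pc, by omega⟩⟩), ?_, rfl⟩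
      simp only [mem_filter, mem_univ, true_and]
      exact ⟨(hrows r (show (pc : ℕ) ≤ c by omega)).trans_lt hlt, Or.inl hr⟩
    · exact (hlt.not_ge (hrows r (show (pc : ℕ) ≤ c by omega))).elim
    · refine ⟨(⟨pr, pc⟩, ⟨r, ⟨pc + 1, by omega⟩⟩), ?_, rfl⟩
      simp only [mem_filter, mem_univ, true_and]
      exact ⟨(hrows r (show (pc : ℕ) + 1 ≤ c by omega)).trans_lt hlt, Or.inr hr⟩

theorem stmt15_general (L : ℕ) (sh : Fin L → ℕ)
    (θ : (r : Fin L) → Fin (sh r) → ℕ) (hrows : ∀ r, Monotone (θ r)) :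
    wStat L sh θ = valStat L sh θ := by
  rw [wStat_eq_card_image_descentPairs θ hrows, valStat_eq_card_image_descentPairs θ hrows]

/-- For every tabloid `θ` (a filling of a partition shape with weakly increasing
rows), the statistic `w(θ)` equals Butler's value statistic `val(θ)`. -/
theorem stmt15 (L : ℕ) (sh : Fin L → ℕ) (hsh : Antitone sh) (hpos : ∀ r, 0 < sh r)
    (θ : (r : Fin L) → Fin (sh r) → ℕ) (hrows : ∀ r, Monotone (θ r)) :
    wStat L sh θ = valStat L sh θ :=
  stmt15_general L sh θ hrows
end
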